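/- arXiv:1711.06558 — 4 statements merged into one kernel-verified Lean document; each statement's English description precedes it below -/
import Mathlib

section
/- Let X be a finite connected k-regular graph with k ≥ 3 and let λ₁(X) = max{λ : λ an eigenvalue of the adjacency matrix of X, λ ≠ k}. Then k − λ₁(X) ≤ 2·h(X), where h(X) is the Cheeger constant of X. -/
open SimpleGraph Finset

/-- `l` is an eigenvalue of the real matrix `A`. -/
def Matrix.IsEigenvalue {V : Type*} [Fintype V] (A : Matrix V V ℝ) (l : ℝ) : Prop :=
  ∃ v : V → ℝ, v ≠ 0 ∧ A.mulVec v = l • v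

/-- The number of edges between a vertex set `Y` and its complement. -/
def SimpleGraph.edgeBoundary {V : Type*} [Fintype V] [DecidableEq V] (G : SimpleGraph V)
    [DecidableRel G.Adj] (Y : Finset V) : ℕ :=
  ((Y ×ˢ Yᶜ).filter fun p => G.Adj p.1 p.2).card

/-- The Cheeger constant `h(X)`: the minimum of `|E(Y, Ȳ)|/|Y|` over nonempty vertex
sets `Y` with `|Y| ≤ |X|/2`. -/
noncomputable def SimpleGraph.cheegerConstant {V : Type*} [Fintype V] [DecidableEq V]
    (G : SimpleGraph V) [DecidableRel G.Adj] : ℝ :=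
  sInf {r : ℝ | ∃ Y : Finset V, Y.Nonempty ∧ 2 * Y.card ≤ Fintype.card V ∧
    r = (G.edgeBoundary Y : ℝ) / (Y.card : ℝ)}

/-- `λ₁(X)`: the largest adjacency eigenvalue different from `k`. -/
noncomputable def SimpleGraph.lambdaOne {V : Type*} [Fintype V] (G : SimpleGraph V)
    [DecidableRel G.Adj] (k : ℕ) : ℝ :=
  sSup {l : ℝ | (G.adjMatrix ℝ).IsEigenvalue l ∧ l ≠ (k : ℝ)}

/-!
Take a set `Y` attaining `h(X)` and test the adjacency form on the vector `f` equal to `|Ȳ|` on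
`Y` and `-|Y|` on `Ȳ`. It sums to zero, so it is orthogonal to the `k`-eigenspace, which consists
of constants because `X` is connected; hence `⟨f, A f⟩ ≤ λ₁ ⟨f, f⟩`. With `n = |X|`, the Laplacian
`k - A` gives `⟨f, (k - A) f⟩ = n² |E(Y, Ȳ)|`, while `⟨f, f⟩ = |Y| |Ȳ| n`, so
`(k - λ₁) |Y| |Ȳ| ≤ n |E(Y, Ȳ)| ≤ 2 |Ȳ| |E(Y, Ȳ)|`.
-/

open Matrix

theorem Fintype.sum_ite_mem_eq {V R : Type*} [Fintype V] [DecidableEq V] [NonAssocSemiring R]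
    (Y : Finset V) (a b : R) : ∑ u, (if u ∈ Y then a else b) = #Y * a + #Yᶜ * b := by
  simp [Finset.sum_ite, Finset.filter_not, Finset.compl_eq_univ_sdiff]

theorem Matrix.IsHermitian.dotProduct_mulVec_le_of_orthogonal {n : Type*} [Fintype n]
    [DecidableEq n] {A : Matrix n n ℝ} (hA : A.IsHermitian) {c : ℝ} {f : n → ℝ}
    (hf : ∀ (μ : ℝ) (v : n → ℝ), A *ᵥ v = μ • v → c < μ → v ⬝ᵥ f = 0) :
    f ⬝ᵥ A *ᵥ f ≤ c * (f ⬝ᵥ f) := by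
  set b := hA.eigenvectorBasis
  have expand : ∀ g : n → ℝ, f ⬝ᵥ g = ∑ i, (b i ⬝ᵥ f) * (b i ⬝ᵥ g) := by
    intro g
    have h := b.sum_inner_mul_inner (WithLp.toLp 2 f) (WithLp.toLp 2 g)
    simp only [EuclideanSpace.inner_eq_star_dotProduct, star_trivial] at h
    rw [dotProduct_comm, ← h]
    simp only [dotProduct_comm g]
  have hAT : Aᵀ = A := by rw [← conjTranspose_eq_transpose_of_trivial, hA.eq]
  have hAb : ∀ i, b i ⬝ᵥ A *ᵥ f = hA.eigenvalues i * (b i ⬝ᵥ f) := by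
    intro i
    rw [dotProduct_mulVec, ← mulVec_transpose, hAT, hA.mulVec_eigenvectorBasis, smul_dotProduct,
      smul_eq_mul]
  rw [expand, expand, Finset.mul_sum]
  refine Finset.sum_le_sum fun i _ => ?_
  rw [hAb]
  rcases le_or_gt (hA.eigenvalues i) c with hle | hlt
  · nlinarith [mul_self_nonneg (b i ⬝ᵥ f)]
  · rw [hf _ _ (hA.mulVec_eigenvectorBasis i) hlt]
    simp

namespace SimpleGraph

variable {V : Type*} [Fintype V] [DecidableEq V] {G : SimpleGraph V} [DecidableRel G.Adj] {k : ℕ}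

theorem IsRegularOfDegree.adjMatrix_mulVec (hreg : G.IsRegularOfDegree k) (v : V → ℝ) :
    G.adjMatrix ℝ *ᵥ v = (k : ℝ) • v - G.lapMatrix ℝ *ᵥ v := by
  have hdeg : G.degMatrix ℝ = (k : ℝ) • 1 := by
    rw [smul_one_eq_diagonal, degMatrix]
    simp [hreg _]
  rw [lapMatrix, hdeg, sub_mulVec, smul_mulVec, one_mulVec]
  abel

theorem IsRegularOfDegree.le_of_isEigenvalue (hreg : G.IsRegularOfDegree k) {l : ℝ}
    (hl : (G.adjMatrix ℝ).IsEigenvalue l) : l ≤ k := by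
  obtain ⟨v, hv0, hv⟩ := hl
  have hLv : G.lapMatrix ℝ *ᵥ v = ((k : ℝ) - l) • v := by
    rw [sub_smul, ← hv, hreg.adjMatrix_mulVec]
    abel
  have hnonneg := (posSemidef_lapMatrix ℝ G).dotProduct_mulVec_nonneg v
  rw [star_trivial, hLv, dotProduct_smul, smul_eq_mul] at hnonneg
  have hpos : 0 < v ⬝ᵥ v := by simpa using dotProduct_star_self_pos_iff.mpr hv0
  nlinarith

theorem Connected.apply_eq_apply_of_adjMatrix_mulVec_eq (hconn : G.Connected)
    (hreg : G.IsRegularOfDegree k) {v : V → ℝ} (hv : G.adjMatrix ℝ *ᵥ v = (k : ℝ) • v)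
    (i j : V) : v i = v j := by
  rw [hreg.adjMatrix_mulVec, sub_eq_self] at hv
  exact (lapMatrix_mulVec_eq_zero_iff_forall_reachable G).mp hv i j (hconn.preconnected i j)

theorem Connected.dotProduct_adjMatrix_mulVec_le_lambdaOne (hconn : G.Connected)
    (hreg : G.IsRegularOfDegree k) {f : V → ℝ} (hf : ∑ u, f u = 0) :
    f ⬝ᵥ G.adjMatrix ℝ *ᵥ f ≤ G.lambdaOne k * (f ⬝ᵥ f) := by
  refine (isHermitian_adjMatrix ℝ G).dotProduct_mulVec_le_of_orthogonal fun μ v hv hμ => ?_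
  by_cases hv0 : v = 0
  · simp [hv0]
  -- an eigenvalue above `λ₁` can only be `k`, whose eigenvectors are constant
  have hμk : μ = k := by
    by_contra hne
    have hbdd : BddAbove {l : ℝ | (G.adjMatrix ℝ).IsEigenvalue l ∧ l ≠ (k : ℝ)} :=
      ⟨k, fun l hl => hreg.le_of_isEigenvalue hl.1⟩
    exact hμ.not_ge (le_csSup hbdd ⟨⟨v, hv0, hv⟩, hne⟩)
  obtain ⟨u₀⟩ := hconn.nonempty
  have hconst : v = fun _ => v u₀ := funext fun i =>
    hconn.apply_eq_apply_of_adjMatrix_mulVec_eq hreg (hμk ▸ hv) i u₀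
  rw [hconst, dotProduct, ← Finset.mul_sum, hf, mul_zero]

theorem cast_edgeBoundary_eq_sum (Y : Finset V) :
    (G.edgeBoundary Y : ℝ) = ∑ i, ∑ j, if G.Adj i j ∧ i ∈ Y ∧ j ∉ Y then 1 else 0 := by
  rw [← Finset.sum_product' (f := fun i j => if G.Adj i j ∧ i ∈ Y ∧ j ∉ Y then (1 : ℝ) else 0),
    Finset.sum_boole, edgeBoundary]
  congr 2
  ext ⟨i, j⟩
  simp
  tauto

theorem ite_mem_dotProduct_lapMatrix_mulVec_ite_mem (Y : Finset V) (a b : ℝ) :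
    (fun u => if u ∈ Y then a else b) ⬝ᵥ G.lapMatrix ℝ *ᵥ (fun u => if u ∈ Y then a else b) =
      (a - b) ^ 2 * G.edgeBoundary Y := by
  rw [← toLinearMap₂'_apply', lapMatrix_toLinearMap₂']
  have hterm : ∀ i j, (if G.Adj i j then ((if i ∈ Y then a else b) - if j ∈ Y then a else b) ^ 2
      else 0) = (a - b) ^ 2 * ((if G.Adj i j ∧ i ∈ Y ∧ j ∉ Y then 1 else 0) +
        (if G.Adj j i ∧ j ∈ Y ∧ i ∉ Y then 1 else 0)) := by
    intro i j
    by_cases hij : G.Adj i j <;> by_cases hi : i ∈ Y <;> by_cases hj : j ∈ Y <;>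
      simp [hij, hi, hj, G.adj_comm j i]; ring
  simp only [hterm, ← Finset.mul_sum, Finset.sum_add_distrib]
  rw [Finset.sum_comm (f := fun i j => if G.Adj j i ∧ j ∈ Y ∧ i ∉ Y then (1 : ℝ) else 0),
    ← cast_edgeBoundary_eq_sum]
  ring

variable (G) in
theorem exists_cheegerConstant_eq (hV : 2 ≤ Fintype.card V) :
    ∃ Y : Finset V, Y.Nonempty ∧ 2 * #Y ≤ Fintype.card V ∧
      G.cheegerConstant = G.edgeBoundary Y / #Y := by
  obtain ⟨u⟩ : Nonempty V := Fintype.card_pos_iff.mp (by omega)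
  have hne : {r : ℝ | ∃ Y : Finset V, Y.Nonempty ∧ 2 * #Y ≤ Fintype.card V ∧
      r = G.edgeBoundary Y / #Y}.Nonempty :=
    ⟨_, {u}, singleton_nonempty u, by simpa using hV, rfl⟩
  have hfin : {r : ℝ | ∃ Y : Finset V, Y.Nonempty ∧ 2 * #Y ≤ Fintype.card V ∧
      r = G.edgeBoundary Y / #Y}.Finite :=
    (Set.finite_range fun Y : Finset V => (G.edgeBoundary Y : ℝ) / #Y).subset
      fun _ ⟨Y, _, _, hr⟩ => ⟨Y, hr.symm⟩
  exact hne.csInf_mem hfin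

theorem Connected.sub_lambdaOne_mul_card_mul_card_compl_le (hconn : G.Connected)
    (hreg : G.IsRegularOfDegree k) (Y : Finset V) :
    ((k : ℝ) - G.lambdaOne k) * (#Y * #Yᶜ) ≤ G.edgeBoundary Y * Fintype.card V := by
  have hn : (#Y : ℝ) + #Yᶜ = Fintype.card V := by exact_mod_cast Finset.card_add_card_compl Y
  have hn0 : (0 : ℝ) < Fintype.card V := by
    have := hconn.nonempty
    exact_mod_cast Fintype.card_pos
  set f : V → ℝ := fun u => if u ∈ Y then (#Yᶜ : ℝ) else -#Y
  have hsum : ∑ u, f u = 0 := by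
    rw [Fintype.sum_ite_mem_eq]
    ring
  have hff : f ⬝ᵥ f = #Y * #Yᶜ * Fintype.card V := by
    have hsq : ∀ u, f u * f u = if u ∈ Y then (#Yᶜ : ℝ) ^ 2 else (#Y : ℝ) ^ 2 := by
      intro u
      by_cases hu : u ∈ Y <;> simp [f, hu, sq]
    rw [dotProduct, Finset.sum_congr rfl fun u _ => hsq u, Fintype.sum_ite_mem_eq, ← hn]
    ring
  have hfLf : f ⬝ᵥ G.lapMatrix ℝ *ᵥ f = (Fintype.card V : ℝ) ^ 2 * G.edgeBoundary Y := by
    rw [ite_mem_dotProduct_lapMatrix_mulVec_ite_mem, ← hn]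
    ring
  have hfAf : f ⬝ᵥ G.adjMatrix ℝ *ᵥ f = k * (f ⬝ᵥ f) - f ⬝ᵥ G.lapMatrix ℝ *ᵥ f := by
    rw [hreg.adjMatrix_mulVec, dotProduct_sub, dotProduct_smul, smul_eq_mul]
  have hrayleigh := hconn.dotProduct_adjMatrix_mulVec_le_lambdaOne hreg hsum
  rw [hfAf, hff, hfLf] at hrayleigh
  refine le_of_mul_le_mul_right ?_ hn0
  nlinarith

end SimpleGraph

/-- Easy direction of the Cheeger inequality: `k - λ₁(X) ≤ 2 h(X)`. -/
theorem cheeger_easy_direction {V : Type*} [Fintype V] [DecidableEq V] (k : ℕ) (hk : 3 ≤ k)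
    (X : SimpleGraph V) [DecidableRel X.Adj]
    (hconn : X.Connected) (hreg : X.IsRegularOfDegree k) :
    (k : ℝ) - X.lambdaOne k ≤ 2 * X.cheegerConstant := by
  obtain ⟨u⟩ := hconn.nonempty
  have hV : 2 ≤ Fintype.card V := by
    have := hreg u ▸ X.degree_lt_card_verts u
    omega
  obtain ⟨Y, hY, hY2, hh⟩ := X.exists_cheegerConstant_eq hV
  have hsplit := Finset.card_add_card_compl Y
  have hm := hY.card_pos
  have hm' : (0 : ℝ) < #Yᶜ := by exact_mod_cast (by omega : 0 < #Yᶜ)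
  have hn : (Fintype.card V : ℝ) ≤ 2 * #Yᶜ := by exact_mod_cast (by omega : _ ≤ 2 * #Yᶜ)
  have he : (0 : ℝ) ≤ X.edgeBoundary Y := Nat.cast_nonneg _
  rw [hh, mul_div_assoc', le_div_iff₀ (by exact_mod_cast hm)]
  refine le_of_mul_le_mul_right ?_ hm'
  calc ((k : ℝ) - X.lambdaOne k) * #Y * #Yᶜ ≤ X.edgeBoundary Y * Fintype.card V := by
        rw [mul_assoc]; exact hconn.sub_lambdaOne_mul_card_mul_card_compl_le hreg Y
    _ ≤ 2 * X.edgeBoundary Y * #Yᶜ := by linarith [mul_le_mul_of_nonneg_left hn he]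
end

section
/- Let X be a finite connected k-regular graph and let λ₁(X) be the largest adjacency eigenvalue different from k. Then h(X)² / (2k) ≤ k − λ₁(X), where h(X) is the Cheeger constant. -/
open SimpleGraph Finset

/-!
Let `v` be an eigenvector for an eigenvalue `λ ≠ k`. It is orthogonal to the constants, so
after replacing `v` by `-v` if necessary its positive part `g = max v 0` is nonzero and supported
on at most half of the vertices. As `A g ≥ A v = λ v` on the support of `g`, we get
`⟨g, A g⟩ ≥ λ ‖g‖²`, i.e. `∑ A_xy (g x - g y)² ≤ 2 (k - λ) ‖g‖²`. Peeling off the level sets of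
`g²` one at a time, each of which has at least `h` boundary edges per vertex, gives
`2 h ‖g‖² ≤ ∑ A_xy |g x² - g y²|`, and by Cauchy–Schwarz the square of the right side is at most
`∑ A_xy (g x - g y)² · ∑ A_xy (g x + g y)² ≤ 2 (k - λ) ‖g‖² · 4 k ‖g‖²`.
-/

open Matrix

section

variable {V : Type*}

lemma abs_add_indicator_sub_add_indicator {S : Finset V} {f : V → ℝ} (hf : 0 ≤ f)
    (hfS : ∀ x ∉ S, f x = 0) {m : ℝ} (hm : 0 ≤ m) (x y : V) :
    |(f x + m * (S : Set V).indicator 1 x) - (f y + m * (S : Set V).indicator 1 y)| =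
      |f x - f y| + m * |(S : Set V).indicator 1 x - (S : Set V).indicator 1 y| := by
  have hfx : 0 ≤ f x := hf x
  have hfy : 0 ≤ f y := hf y
  by_cases hx : x ∈ S <;> by_cases hy : y ∈ S <;> simp [hx, hy, hfS] <;> grind

variable [Fintype V]

lemma exists_pos_of_sum_eq_zero {v : V → ℝ} (hv : v ≠ 0) (hsum : ∑ x, v x = 0) :
    ∃ x, 0 < v x := by
  by_contra! hle
  exact hv (funext fun x => (sum_eq_zero_iff_of_nonpos fun x _ => hle x).mp hsum x (mem_univ x))

lemma exists_eq_or_eq_neg_with_small_positive_set [DecidableEq V] {v : V → ℝ} (hv : v ≠ 0)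
    (hsum : ∑ x, v x = 0) :
    ∃ w, (w = v ∨ w = -v) ∧ (∃ x, 0 < w x) ∧ 2 * #{x | 0 < w x} ≤ Fintype.card V := by
  have hdisj : Disjoint ({x | 0 < v x} : Finset V) ({x | 0 < (-v) x} : Finset V) :=
    disjoint_filter.mpr fun x _ hx hx' => by simp only [Pi.neg_apply, neg_pos] at hx'; linarith
  have hcard := card_union_of_disjoint hdisj ▸ card_le_univ _
  by_cases hsmall : 2 * #{x | 0 < v x} ≤ Fintype.card V
  · exact ⟨v, .inl rfl, exists_pos_of_sum_eq_zero hv hsum, hsmall⟩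
  · exact ⟨-v, .inr rfl, exists_pos_of_sum_eq_zero (neg_ne_zero.mpr hv) (by simp [hsum]), by omega⟩

variable {A : Matrix V V ℝ}

lemma mul_sum_sq_le_dotProduct_mulVec_posPart (hA : ∀ i j, 0 ≤ A i j) {l : ℝ} {v : V → ℝ}
    (hv : A *ᵥ v = l • v) :
    l * ∑ x, max (v x) 0 ^ 2 ≤ (fun x => max (v x) 0) ⬝ᵥ A *ᵥ fun x => max (v x) 0 := by
  set g : V → ℝ := fun x => max (v x) 0
  rw [mul_sum]
  refine sum_le_sum fun x _ => ?_
  have hAv : l * v x ≤ (A *ᵥ g) x := by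
    rw [← smul_eq_mul, ← Pi.smul_apply, ← hv]
    exact sum_le_sum fun y _ => mul_le_mul_of_nonneg_left (le_max_left _ _) (hA x y)
  have hgv : g x * v x = g x ^ 2 := by
    rcases le_total (v x) 0 with h | h <;> simp [g, h, sq]
  calc l * g x ^ 2 = g x * (l * v x) := by rw [← hgv]; ring
    _ ≤ g x * (A *ᵥ g) x := mul_le_mul_of_nonneg_left hAv (le_max_right _ _)

lemma sq_sum_sum_mul_abs_sq_sub_sq_le (hA : ∀ i j, 0 ≤ A i j) (g : V → ℝ) :
    (∑ x, ∑ y, A x y * |g x ^ 2 - g y ^ 2|) ^ 2 ≤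
      (∑ x, ∑ y, A x y * (g x - g y) ^ 2) * ∑ x, ∑ y, A x y * (g x + g y) ^ 2 := by
  simp only [← Fintype.sum_prod_type']
  refine sum_sq_le_sum_mul_sum_of_sq_le_mul _ (fun p _ => mul_nonneg (hA _ _) (sq_nonneg _))
    (fun p _ => mul_nonneg (hA _ _) (sq_nonneg _)) fun p _ => le_of_eq ?_
  rw [mul_pow, sq_abs]
  ring

end

namespace SimpleGraph

section Regular

variable {V : Type*} {G : SimpleGraph V} [DecidableRel G.Adj]

variable (G) in
lemma adjMatrix_apply_nonneg (x y : V) : 0 ≤ G.adjMatrix ℝ x y := by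
  rw [adjMatrix_apply]
  split_ifs <;> norm_num

variable [Fintype V] {k : ℕ}

lemma sum_adjMatrix_apply_of_regular (hreg : G.IsRegularOfDegree k) (x : V) :
    ∑ y, G.adjMatrix ℝ x y = k := by
  simp [adjMatrix_apply, sum_boole, ← neighborFinset_eq_filter, hreg x]

lemma sum_sum_adjMatrix_mul_left (hreg : G.IsRegularOfDegree k) (f : V → ℝ) :
    ∑ x, ∑ y, G.adjMatrix ℝ x y * f x = k * ∑ x, f x := by
  simp only [← sum_mul, sum_adjMatrix_apply_of_regular hreg, mul_sum]

lemma sum_sum_adjMatrix_mul_right (hreg : G.IsRegularOfDegree k) (f : V → ℝ) :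
    ∑ x, ∑ y, G.adjMatrix ℝ x y * f y = k * ∑ x, f x := by
  rw [sum_comm, ← sum_sum_adjMatrix_mul_left hreg f]
  exact sum_congr rfl fun y _ => sum_congr rfl fun x _ => by rw [G.isSymm_adjMatrix.apply]

lemma sum_eq_zero_of_mulVec_eq_smul (hreg : G.IsRegularOfDegree k) {l : ℝ} {v : V → ℝ}
    (hv : G.adjMatrix ℝ *ᵥ v = l • v) (hl : l ≠ k) : ∑ x, v x = 0 := by
  have hsum : ∑ x, (G.adjMatrix ℝ *ᵥ v) x = k * ∑ x, v x :=
    sum_sum_adjMatrix_mul_right hreg v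
  rw [hv] at hsum
  simp only [Pi.smul_apply, smul_eq_mul, ← mul_sum] at hsum
  exact (mul_eq_mul_right_iff.mp hsum).resolve_left hl

lemma dotProduct_adjMatrix_mulVec_self (g : V → ℝ) :
    g ⬝ᵥ G.adjMatrix ℝ *ᵥ g = ∑ x, ∑ y, G.adjMatrix ℝ x y * (g x * g y) := by
  simp only [dotProduct, mulVec, mul_sum]
  exact sum_congr rfl fun x _ => sum_congr rfl fun y _ => by ring

lemma sum_sum_adjMatrix_mul_sub_sq (hreg : G.IsRegularOfDegree k) (g : V → ℝ) :
    ∑ x, ∑ y, G.adjMatrix ℝ x y * (g x - g y) ^ 2 =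
      2 * (k * ∑ x, g x ^ 2 - g ⬝ᵥ G.adjMatrix ℝ *ᵥ g) := by
  have hexp : ∀ x y, G.adjMatrix ℝ x y * (g x - g y) ^ 2 = G.adjMatrix ℝ x y * g x ^ 2 +
      G.adjMatrix ℝ x y * g y ^ 2 - 2 * (G.adjMatrix ℝ x y * (g x * g y)) := fun x y => by ring
  simp only [hexp, sum_sub_distrib, sum_add_distrib, ← mul_sum, sum_sum_adjMatrix_mul_left hreg,
    sum_sum_adjMatrix_mul_right hreg, dotProduct_adjMatrix_mulVec_self]
  ring

lemma sum_sum_adjMatrix_mul_add_sq (hreg : G.IsRegularOfDegree k) (g : V → ℝ) :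
    ∑ x, ∑ y, G.adjMatrix ℝ x y * (g x + g y) ^ 2 =
      2 * (k * ∑ x, g x ^ 2 + g ⬝ᵥ G.adjMatrix ℝ *ᵥ g) := by
  have hexp : ∀ x y, G.adjMatrix ℝ x y * (g x + g y) ^ 2 = G.adjMatrix ℝ x y * g x ^ 2 +
      G.adjMatrix ℝ x y * g y ^ 2 + 2 * (G.adjMatrix ℝ x y * (g x * g y)) := fun x y => by ring
  simp only [hexp, sum_add_distrib, ← mul_sum, sum_sum_adjMatrix_mul_left hreg,
    sum_sum_adjMatrix_mul_right hreg, dotProduct_adjMatrix_mulVec_self]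
  ring

end Regular

section Cheeger

variable {V : Type*} [Fintype V] [DecidableEq V] (G : SimpleGraph V) [DecidableRel G.Adj]

lemma cheegerConstant_nonneg : 0 ≤ G.cheegerConstant :=
  Real.sInf_nonneg (by rintro r ⟨Y, -, -, rfl⟩; positivity)

lemma cheegerConstant_mul_card_le {Y : Finset V} (hY : Y.Nonempty)
    (hsmall : 2 * #Y ≤ Fintype.card V) : G.cheegerConstant * #Y ≤ G.edgeBoundary Y := by
  rw [← le_div_iff₀ (by exact_mod_cast hY.card_pos)]
  exact csInf_le ⟨0, by rintro r ⟨Y, -, -, rfl⟩; positivity⟩ ⟨Y, hY, hsmall, rfl⟩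

lemma edgeBoundary_eq_sum_sum_adjMatrix (Y : Finset V) :
    (G.edgeBoundary Y : ℝ) = ∑ x ∈ Y, ∑ y ∈ Yᶜ, G.adjMatrix ℝ x y := by
  rw [edgeBoundary, card_filter, Nat.cast_sum, sum_product]
  simp [adjMatrix_apply]

lemma edgeBoundary_eq_sum_compl_sum_adjMatrix (Y : Finset V) :
    (G.edgeBoundary Y : ℝ) = ∑ x ∈ Yᶜ, ∑ y ∈ Y, G.adjMatrix ℝ x y := by
  rw [edgeBoundary_eq_sum_sum_adjMatrix]
  exact sum_comm.trans <|
    sum_congr rfl fun x _ => sum_congr rfl fun y _ => G.isSymm_adjMatrix.apply x y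

lemma cheegerConstant_le_of_regular {k : ℕ} (hreg : G.IsRegularOfDegree k) :
    G.cheegerConstant ≤ k := by
  obtain hempty | ⟨-, Y, hY, hsmall, rfl⟩ := Set.eq_empty_or_nonempty {r : ℝ | ∃ Y : Finset V,
    Y.Nonempty ∧ 2 * #Y ≤ Fintype.card V ∧ r = (G.edgeBoundary Y : ℝ) / #Y}
  · rw [cheegerConstant, hempty, Real.sInf_empty]
    positivity
  have hboundary : (G.edgeBoundary Y : ℝ) ≤ k * #Y := calc
    (G.edgeBoundary Y : ℝ) ≤ ∑ x ∈ Y, ∑ y, G.adjMatrix ℝ x y := by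
      rw [edgeBoundary_eq_sum_sum_adjMatrix]
      gcongr with x
      exacts [fun y _ _ => G.adjMatrix_apply_nonneg x y, subset_univ _]
    _ = k * #Y := by
      simp only [sum_adjMatrix_apply_of_regular hreg, sum_const, nsmul_eq_mul, mul_comm]
  have hpos : (0 : ℝ) < #Y := by exact_mod_cast hY.card_pos
  nlinarith [G.cheegerConstant_mul_card_le hY hsmall]

lemma sum_sum_adjMatrix_mul_abs_indicator_sub (S : Finset V) :
    ∑ x, ∑ y, G.adjMatrix ℝ x y *
      |(S : Set V).indicator 1 x - (S : Set V).indicator 1 y| = 2 * G.edgeBoundary S := by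
  rw [← sum_add_sum_compl S, two_mul]
  nth_rw 1 [edgeBoundary_eq_sum_sum_adjMatrix]
  rw [edgeBoundary_eq_sum_compl_sum_adjMatrix]
  congr 1 <;> refine sum_congr rfl fun x hx => ?_ <;> rw [← sum_add_sum_compl S]
  · rw [sum_eq_zero fun y hy => by simp [hx, hy], zero_add]
    exact sum_congr rfl fun y hy => by simp [hx, mem_compl.mp hy]
  · rw [sum_eq_zero (s := Sᶜ) fun y hy => by simp [mem_compl.mp hx, mem_compl.mp hy], add_zero]
    exact sum_congr rfl fun y hy => by simp [mem_compl.mp hx, hy]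

theorem two_mul_cheegerConstant_mul_sum_le {S : Finset V} (hS : 2 * #S ≤ Fintype.card V)
    {f : V → ℝ} (hf : 0 ≤ f) (hfS : ∀ x ∉ S, f x = 0) :
    2 * G.cheegerConstant * ∑ x, f x ≤ ∑ x, ∑ y, G.adjMatrix ℝ x y * |f x - f y| := by
  induction S using Finset.strongInduction generalizing f with
  | H S ih =>
  obtain rfl | hne := S.eq_empty_or_nonempty
  · simp [show f = 0 from funext fun x => hfS x (notMem_empty x)]
  -- Peel off the lowest level: `f = f' + m • 1_S` with `m = min_S f`, and `f'` lives on `S - x₀`.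
  obtain ⟨x₀, hx₀, hmin⟩ := S.exists_min_image f hne
  set m := f x₀
  set ind := (S : Set V).indicator (1 : V → ℝ)
  set f' : V → ℝ := fun x => f x - m * ind x
  have hf' : 0 ≤ f' := fun x => by
    by_cases hx : x ∈ S <;> simp [f', ind, hx, hfS, hmin x]
  have hf'S : ∀ x ∉ S.erase x₀, f' x = 0 := fun x hx => by
    by_cases hxS : x ∈ S
    · simp [f', ind, show x = x₀ by simp_all, hx₀, m]
    · simp [f', ind, hxS, hfS]
  have hf_eq : ∀ x, f x = f' x + m * ind x := fun x => by ring
  have hsum : ∑ x, f x = ∑ x, f' x + m * #S := by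
    simp [hf_eq, sum_add_distrib, ind, Set.indicator_apply, mul_comm]
  have habs : ∑ x, ∑ y, G.adjMatrix ℝ x y * |f x - f y| =
      ∑ x, ∑ y, G.adjMatrix ℝ x y * |f' x - f' y| + m * (2 * G.edgeBoundary S) := by
    rw [← G.sum_sum_adjMatrix_mul_abs_indicator_sub S, mul_sum, ← sum_add_distrib]
    refine sum_congr rfl fun x _ => ?_
    rw [mul_sum, ← sum_add_distrib]
    refine sum_congr rfl fun y _ => ?_
    rw [hf_eq x, hf_eq y, abs_add_indicator_sub_add_indicator hf'
      (fun z hz => hf'S z fun h => hz (mem_of_mem_erase h)) (hf x₀)]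
    ring
  have hsmall : 2 * #(S.erase x₀) ≤ Fintype.card V := by
    have := card_erase_le (s := S) (a := x₀)
    omega
  have hlevel := ih (S.erase x₀) (erase_ssubset hx₀) hsmall hf' hf'S
  have hcut := mul_le_mul_of_nonneg_left (G.cheegerConstant_mul_card_le hne hS) (hf x₀)
  rw [hsum, habs]
  linarith

theorem cheegerConstant_sq_div_le_of_mulVec_eq_smul {k : ℕ} (hreg : G.IsRegularOfDegree k)
    {l : ℝ} {v : V → ℝ} (hv : G.adjMatrix ℝ *ᵥ v = l • v) (hpos : ∃ x, 0 < v x)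
    (hsmall : 2 * #{x | 0 < v x} ≤ Fintype.card V) :
    G.cheegerConstant ^ 2 / (2 * k) ≤ k - l := by
  set g : V → ℝ := fun x => max (v x) 0
  set N := ∑ x, g x ^ 2
  set C := g ⬝ᵥ G.adjMatrix ℝ *ᵥ g
  set T := ∑ x, ∑ y, G.adjMatrix ℝ x y * |g x ^ 2 - g y ^ 2|
  set D := ∑ x, ∑ y, G.adjMatrix ℝ x y * (g x - g y) ^ 2
  set Q := ∑ x, ∑ y, G.adjMatrix ℝ x y * (g x + g y) ^ 2
  have hA := G.adjMatrix_apply_nonneg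
  have hN : 0 < N := by
    obtain ⟨x, hx⟩ := hpos
    exact (by simp [g, hx] : 0 < g x ^ 2).trans_le
      (single_le_sum (fun y _ => sq_nonneg (g y)) (mem_univ x))
  have hC : l * N ≤ C := mul_sum_sq_le_dotProduct_mulVec_posPart hA hv
  have hD : D = 2 * (k * N - C) := sum_sum_adjMatrix_mul_sub_sq hreg g
  have hQ : Q = 2 * (k * N + C) := sum_sum_adjMatrix_mul_add_sq hreg g
  have hD0 : 0 ≤ D := sum_nonneg fun x _ => sum_nonneg fun y _ => mul_nonneg (hA x y) (sq_nonneg _)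
  have hQ0 : 0 ≤ Q := sum_nonneg fun x _ => sum_nonneg fun y _ => mul_nonneg (hA x y) (sq_nonneg _)
  have hkl : 0 ≤ k - l := le_of_mul_le_mul_right (by linarith : 0 * N ≤ (k - l) * N) hN
  have hT : 2 * G.cheegerConstant * N ≤ T :=
    G.two_mul_cheegerConstant_mul_sum_le hsmall (fun x => sq_nonneg (g x))
      fun x hx => by simp_all [g]
  have hsq : (2 * G.cheegerConstant * N) ^ 2 ≤ (2 * (k - l) * N) * (4 * k * N) := calc
    (2 * G.cheegerConstant * N) ^ 2 ≤ T ^ 2 :=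
      pow_le_pow_left₀ (by have := G.cheegerConstant_nonneg; positivity) hT 2
    _ ≤ D * Q := sq_sum_sum_mul_abs_sq_sub_sq_le hA g
    _ ≤ (2 * (k - l) * N) * (4 * k * N) :=
      mul_le_mul (by linarith) (by linarith) hQ0 (by positivity)
  refine div_le_of_le_mul₀ (by positivity) hkl
    (le_of_mul_le_mul_right ?_ (by positivity : (0 : ℝ) < 4 * N ^ 2))
  linarith

end Cheeger

end SimpleGraph

theorem cheeger_hard_direction_general {V : Type*} [Fintype V] [DecidableEq V] (k : ℕ)
    (X : SimpleGraph V) [DecidableRel X.Adj]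
    (hreg : X.IsRegularOfDegree k) :
    X.cheegerConstant ^ 2 / (2 * k) ≤ (k : ℝ) - X.lambdaOne k := by
  obtain hempty | hne :=
    Set.eq_empty_or_nonempty {l : ℝ | (X.adjMatrix ℝ).IsEigenvalue l ∧ l ≠ (k : ℝ)}
  · rw [lambdaOne, hempty, Real.sSup_empty, sub_zero]
    have h0 := X.cheegerConstant_nonneg
    have hk := X.cheegerConstant_le_of_regular hreg
    exact div_le_of_le_mul₀ (by positivity) (by positivity) (by nlinarith)
  have hbound : ∀ l ∈ {l : ℝ | (X.adjMatrix ℝ).IsEigenvalue l ∧ l ≠ (k : ℝ)},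
      l ≤ k - X.cheegerConstant ^ 2 / (2 * k) := by
    rintro l ⟨⟨v, hv0, hv⟩, hlk⟩
    obtain ⟨w, hw, hpos, hsmall⟩ := exists_eq_or_eq_neg_with_small_positive_set hv0
      (X.sum_eq_zero_of_mulVec_eq_smul hreg hv hlk)
    have hw : X.adjMatrix ℝ *ᵥ w = l • w := by
      rcases hw with rfl | rfl
      exacts [hv, by rw [mulVec_neg, hv, smul_neg]]
    linarith [X.cheegerConstant_sq_div_le_of_mulVec_eq_smul hreg hw hpos hsmall]
  rw [lambdaOne]
  linarith [csSup_le hne hbound]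

/-- Hard direction of the Cheeger inequality: `h(X)² / (2k) ≤ k - λ₁(X)`. -/
theorem cheeger_hard_direction {V : Type*} [Fintype V] [DecidableEq V] (k : ℕ)
    (X : SimpleGraph V) [DecidableRel X.Adj]
    (hconn : X.Connected) (hreg : X.IsRegularOfDegree k) :
    X.cheegerConstant ^ 2 / (2 * k) ≤ (k : ℝ) - X.lambdaOne k :=
  cheeger_hard_direction_general k X hreg
end

section
/- (Alon–Boppana) For every k ≥ 3 and every ε > 0, there exists N such that every finite connected k-regular graph X with more than N vertices satisfies λ₁(X) ≥ 2√(k−1) − ε, where λ₁(X) is the largest adjacency eigenvalue different from k. -/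
open SimpleGraph

/-!
Fix an edge `uv` and put `q = √(k - 1)`. The test function equal to `q⁻ʲ` on vertices at
distance `j ≤ r` from the edge and `0` farther out has Rayleigh quotient at least
`2q - (2q - 1)/(r + 1)`. Measuring distance from an edge rather than from a vertex guarantees that
every vertex, the endpoints included, has a neighbour no farther out, hence at most `k - 1`
neighbours farther out. With the weights `q⁻ʲ` the resulting local energy bound is exact at every
layer but the last, and the last layer carries at most a `1/(r + 1)` share of the mass because the
layer masses `#{d = j} q⁻²ʲ` do not increase.

A graph with many vertices contains a second edge whose `r`-neighbourhood is at distance `≥ 2`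
from that of `uv`, so the two test functions have disjoint supports and no edges between them. A
combination of them with total sum `0` keeps the Rayleigh bound and is orthogonal to the
`k`-eigenspace, which in a connected `k`-regular graph consists of the constants. The maximum of the
Rayleigh quotient on the orthogonal complement of that eigenspace is an eigenvalue other than `k`.
-/

open Finset Matrix Module.End WithLp
open scoped RealInnerProductSpace

theorem LinearMap.IsSymmetric.exists_hasEigenvalue_ne_ge_of_mem_orthogonal
    {E : Type*} [NormedAddCommGroup E] [InnerProductSpace ℝ E] [FiniteDimensional ℝ E]
    {T : E →ₗ[ℝ] E} (hT : T.IsSymmetric) {μ c : ℝ} {x : E}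
    (hx : x ∈ (eigenspace T μ)ᗮ) (hx0 : x ≠ 0) (hc : c * ‖x‖ ^ 2 ≤ ⟪T x, x⟫) :
    ∃ ν, HasEigenvalue T ν ∧ ν ≠ μ ∧ c ≤ ν := by
  set W := (eigenspace T μ)ᗮ
  have hW : ∀ v ∈ W, T v ∈ W := hT.invariant_orthogonalComplement_eigenspace μ
  set S := T.restrict hW
  have : Nontrivial W := nontrivial_of_ne ⟨x, hx⟩ 0 (by simpa using hx0)
  set ν := ⨆ y : {y : W // y ≠ 0}, RCLike.re ⟪S y, y⟫ / ‖(y : W)‖ ^ 2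
  obtain ⟨⟨v, hvW⟩, hv, hv0⟩ :=
    (hT.restrict_invariant hW).hasEigenvalue_iSup_of_finiteDimensional.exists_hasEigenvector
  have hTv : v ∈ eigenspace T ν :=
    mem_eigenspace_iff.mpr (congrArg Subtype.val (mem_eigenspace_iff.mp hv))
  have hv0 : v ≠ 0 := by simpa using hv0
  refine ⟨ν, hasEigenvalue_of_hasEigenvector ⟨hTv, hv0⟩, fun hνμ => hv0 ?_, ?_⟩
  · rw [hνμ] at hTv
    exact inner_self_eq_zero.mp (hvW v hTv)
  · have hbdd : BddAbove
        (Set.range fun y : {y : W // y ≠ 0} => RCLike.re ⟪S y, y⟫ / ‖(y : W)‖ ^ 2) := by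
      refine ⟨‖LinearMap.toContinuousLinearMap S‖, ?_⟩
      rintro _ ⟨y, rfl⟩
      exact (le_abs_self _).trans
        ((LinearMap.toContinuousLinearMap S).rayleighQuotient_le_norm y)
    calc c ≤ ⟪T x, x⟫ / ‖x‖ ^ 2 := by rwa [le_div_iff₀ (by positivity)]
      _ ≤ ν := le_ciSup hbdd ⟨⟨x, hx⟩, by simpa using hx0⟩

namespace Matrix

variable {V : Type*} [Fintype V] {A : Matrix V V ℝ}

theorem IsSymm.exists_sum_eq_zero_le_dotProduct_mulVec (hA : A.IsSymm) {g h : V → ℝ} {c : ℝ}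
    (hg0 : g ≠ 0) (hh : ∑ x, h x ≠ 0)
    (hsep : ∀ x y, g x ≠ 0 → h y ≠ 0 → x ≠ y ∧ A x y = 0)
    (hgc : c * (g ⬝ᵥ g) ≤ g ⬝ᵥ (A *ᵥ g))
    (hhc : c * (h ⬝ᵥ h) ≤ h ⬝ᵥ (A *ᵥ h)) :
    ∃ f : V → ℝ, f ≠ 0 ∧ ∑ x, f x = 0 ∧ c * (f ⬝ᵥ f) ≤ f ⬝ᵥ (A *ᵥ f) := by
  set a := ∑ x, h x
  set b := ∑ x, g x
  have hgh : g ⬝ᵥ h = 0 := sum_eq_zero fun x _ => by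
    by_cases hgx : g x = 0
    · simp [hgx]
    by_cases hhx : h x = 0
    · simp [hhx]
    exact absurd rfl (hsep x x hgx hhx).1
  have hgAh : g ⬝ᵥ (A *ᵥ h) = 0 := by
    simp only [dotProduct, mulVec, mul_sum]
    refine sum_eq_zero fun x _ => sum_eq_zero fun y _ => ?_
    by_cases hgx : g x = 0
    · simp [hgx]
    by_cases hhy : h y = 0
    · simp [hhy]
    simp [(hsep x y hgx hhy).2]
  have hhAg : h ⬝ᵥ (A *ᵥ g) = 0 := by
    rw [dotProduct_mulVec, ← mulVec_transpose, hA.eq, dotProduct_comm, hgAh]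
  obtain ⟨x, hx⟩ : ∃ x, g x ≠ 0 := Function.ne_iff.mp hg0
  have hhx : h x = 0 := by_contra fun hhx => (hsep x x hx hhx).1 rfl
  refine ⟨a • g - b • h, fun hf => ?_, ?_, ?_⟩
  · have := congrFun hf x
    simp [hhx, hh] at this
    exact hx this
  · simp only [Pi.sub_apply, Pi.smul_apply, smul_eq_mul, sum_sub_distrib, ← mul_sum, a, b]
    ring
  · simp only [mulVec_sub, mulVec_smul, dotProduct_sub, sub_dotProduct, dotProduct_smul,
      smul_dotProduct, smul_eq_mul, hgh, hgAh, hhAg, dotProduct_comm h g]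
    nlinarith [mul_le_mul_of_nonneg_left hgc (sq_nonneg a),
      mul_le_mul_of_nonneg_left hhc (sq_nonneg b)]

variable [DecidableEq V]

theorem isEigenvalue_iff_hasEigenvalue_toEuclideanLin {l : ℝ} :
    A.IsEigenvalue l ↔ HasEigenvalue (toEuclideanLin A) l := by
  constructor
  · rintro ⟨v, hv0, hv⟩
    refine hasEigenvalue_of_hasEigenvector (x := toLp 2 v) ⟨mem_eigenspace_iff.mpr ?_, by simpa⟩
    simp [toLpLin_apply, hv]
  · intro h
    obtain ⟨v, hv, hv0⟩ := h.exists_hasEigenvector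
    exact ⟨ofLp v, by simpa using hv0, congrArg ofLp (mem_eigenspace_iff.mp hv)⟩

theorem bddAbove_setOf_isEigenvalue (p : ℝ → Prop) : BddAbove {l | A.IsEigenvalue l ∧ p l} :=
  ((finite_hasEigenvalue (toEuclideanLin A)).subset
    fun _ hl => isEigenvalue_iff_hasEigenvalue_toEuclideanLin.mp hl.1).bddAbove

theorem IsHermitian.exists_isEigenvalue_ne_ge (hA : A.IsHermitian) {μ c : ℝ} {f : V → ℝ}
    (hf0 : f ≠ 0) (hf : ∀ w, A *ᵥ w = μ • w → w ⬝ᵥ f = 0)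
    (hc : c * (f ⬝ᵥ f) ≤ f ⬝ᵥ (A *ᵥ f)) :
    ∃ ν, A.IsEigenvalue ν ∧ ν ≠ μ ∧ c ≤ ν := by
  set x : EuclideanSpace ℝ V := toLp 2 f
  have hx : x ∈ (eigenspace (toEuclideanLin A) μ)ᗮ := fun w hw => by
    simpa [x, EuclideanSpace.inner_eq_star_dotProduct, dotProduct_comm] using
      hf (ofLp w) (congrArg ofLp (mem_eigenspace_iff.mp hw))
  have hx0 : x ≠ 0 := by simpa [x] using hf0
  have hxc : c * ‖x‖ ^ 2 ≤ ⟪toEuclideanLin A x, x⟫ := by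
    rwa [← real_inner_self_eq_norm_sq, toLpLin_toLp, EuclideanSpace.inner_toLp_toLp,
      EuclideanSpace.inner_toLp_toLp, star_trivial, star_trivial]
  obtain ⟨ν, hν, hνμ, hcν⟩ := (isSymmetric_toEuclideanLin_iff.mpr hA :
    (toEuclideanLin A).IsSymmetric).exists_hasEigenvalue_ne_ge_of_mem_orthogonal hx hx0 hxc
  exact ⟨ν, isEigenvalue_iff_hasEigenvalue_toEuclideanLin.mpr hν, hνμ, hcν⟩

end Matrix

noncomputable def truncGeomWeight (q : ℝ) (r j : ℕ) : ℝ :=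
  if j ≤ r then q⁻¹ ^ j else 0

section truncGeomWeight

variable {q : ℝ} {r j : ℕ}

lemma truncGeomWeight_nonneg (hq : 0 ≤ q) (r j : ℕ) : 0 ≤ truncGeomWeight q r j := by
  unfold truncGeomWeight
  split_ifs <;> positivity

@[simp] lemma truncGeomWeight_zero (q : ℝ) (r : ℕ) : truncGeomWeight q r 0 = 1 := by
  simp [truncGeomWeight]

lemma truncGeomWeight_of_lt (h : r < j) : truncGeomWeight q r j = 0 :=
  if_neg h.not_ge

lemma mul_truncGeomWeight_add_one (hq : q ≠ 0) (h : j < r) :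
    q * truncGeomWeight q r (j + 1) = truncGeomWeight q r j := by
  rw [truncGeomWeight, truncGeomWeight, if_pos (Nat.succ_le_of_lt h), if_pos h.le, pow_succ,
    ← mul_assoc, mul_comm q, mul_assoc, mul_inv_cancel₀ hq, mul_one]

lemma truncGeomWeight_sq_identity (hq : q ≠ 0) (r j : ℕ) :
    (q ^ 2 + 1) * truncGeomWeight q r j ^ 2 -
        q ^ 2 * (truncGeomWeight q r j - truncGeomWeight q r (j + 1)) ^ 2 =
      2 * q * truncGeomWeight q r j ^ 2 -
        if j = r then (2 * q - 1) * truncGeomWeight q r r ^ 2 else 0 := by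
  rcases lt_trichotomy j r with h | rfl | h
  · rw [if_neg h.ne, ← mul_truncGeomWeight_add_one hq h]
    ring
  · rw [if_pos rfl, truncGeomWeight_of_lt (Nat.lt_succ_self j)]
    ring
  · rw [if_neg h.ne', truncGeomWeight_of_lt h,
      truncGeomWeight_of_lt (h.trans (Nat.lt_succ_self j))]
    ring

end truncGeomWeight

namespace SimpleGraph

variable {V : Type*} {X : SimpleGraph V} {u v x y : V} {k : ℕ}

lemma Connected.exists_adj_dist_add_one_eq (hX : X.Connected) (h : X.dist u x ≠ 0) :
    ∃ y, X.Adj x y ∧ X.dist u y + 1 = X.dist u x := by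
  rw [dist_comm] at h
  obtain ⟨p, hp⟩ := exists_walk_of_dist_ne_zero h
  obtain ⟨y, hxy, p', rfl⟩ := p.exists_eq_cons_of_ne fun hxu => h (by rw [hxu, dist_self])
  have hy : X.dist u y ≤ p'.length := dist_comm.trans_le (dist_le p')
  have hx : X.dist u x ≤ X.dist u y + 1 := by
    simpa [dist_eq_one_iff_adj.mpr hxy.symm] using hX.dist_triangle (u := u) (v := y) (w := x)
  rw [Walk.length_cons, dist_comm] at hp
  exact ⟨y, hxy, by omega⟩

noncomputable def edgeDist (X : SimpleGraph V) (u v x : V) : ℕ :=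
  min (X.dist u x) (X.dist v x)

lemma Connected.edgeDist_le_add_dist (hX : X.Connected) (u v x y : V) :
    X.edgeDist u v y ≤ X.edgeDist u v x + X.dist x y := by
  have hu := hX.dist_triangle (u := u) (v := x) (w := y)
  have hv := hX.dist_triangle (u := v) (v := x) (w := y)
  unfold edgeDist
  omega

lemma Connected.edgeDist_le_add_one_of_adj (hX : X.Connected) (h : X.Adj x y) :
    X.edgeDist u v y ≤ X.edgeDist u v x + 1 := by
  simpa [dist_eq_one_iff_adj.mpr h] using hX.edgeDist_le_add_dist u v x y

lemma Connected.edgeDist_eq_zero_iff (hX : X.Connected) :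
    X.edgeDist u v x = 0 ↔ x = u ∨ x = v := by
  rw [edgeDist, Nat.min_eq_zero_iff, hX.dist_eq_zero_iff, hX.dist_eq_zero_iff, eq_comm,
    @eq_comm _ v]

lemma Connected.exists_adj_edgeDist_add_one_eq (hX : X.Connected) (hx : X.edgeDist u v x ≠ 0) :
    ∃ y, X.Adj x y ∧ X.edgeDist u v y + 1 = X.edgeDist u v x := by
  obtain ⟨w, hw, hwx⟩ : ∃ w, (w = u ∨ w = v) ∧ X.dist w x = X.edgeDist u v x := by
    rcases min_choice (X.dist u x) (X.dist v x) with h | h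
    · exact ⟨u, .inl rfl, h.symm⟩
    · exact ⟨v, .inr rfl, h.symm⟩
  obtain ⟨y, hxy, hy⟩ := hX.exists_adj_dist_add_one_eq (hwx ▸ hx)
  have hyw : X.edgeDist u v y ≤ X.dist w y := by
    rcases hw with rfl | rfl
    exacts [min_le_left _ _, min_le_right _ _]
  have := hX.edgeDist_le_add_one_of_adj (u := u) (v := v) hxy.symm
  exact ⟨y, hxy, by omega⟩

lemma Connected.exists_adj_edgeDist_le (hX : X.Connected) (huv : X.Adj u v) (x : V) :
    ∃ y, X.Adj x y ∧ X.edgeDist u v y ≤ X.edgeDist u v x := by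
  by_cases hx : X.edgeDist u v x = 0
  · rw [hx]
    rcases hX.edgeDist_eq_zero_iff.mp hx with rfl | rfl
    · exact ⟨v, huv, (hX.edgeDist_eq_zero_iff.mpr (.inr rfl)).le⟩
    · exact ⟨u, huv.symm, (hX.edgeDist_eq_zero_iff.mpr (.inl rfl)).le⟩
  · obtain ⟨y, hxy, hy⟩ := hX.exists_adj_edgeDist_add_one_eq hx
    exact ⟨y, hxy, by omega⟩

lemma Connected.two_le_dist_of_edgeDist_le (hX : X.Connected) {r : ℕ} {z z' : V}
    (hz : 2 * r + 2 < X.edgeDist u v z) (hzz' : X.Adj z z') (hx : X.edgeDist u v x ≤ r)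
    (hy : X.edgeDist z z' y ≤ r) : 2 ≤ X.dist x y := by
  have hz' : X.edgeDist u v z ≤ X.edgeDist u v z' + 1 := hX.edgeDist_le_add_one_of_adj hzz'.symm
  have hxy := hX.edgeDist_le_add_dist u v x y
  have hyz := hX.edgeDist_le_add_dist u v y z
  have hyz' := hX.edgeDist_le_add_dist u v y z'
  rw [dist_comm] at hyz hyz'
  have : X.dist z y ≤ r ∨ X.dist z' y ≤ r := min_le_iff.mp hy
  omega

lemma ne_and_adjMatrix_eq_zero_of_two_le_dist [DecidableRel X.Adj] (h : 2 ≤ X.dist x y) :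
    x ≠ y ∧ X.adjMatrix ℝ x y = 0 := by
  refine ⟨by rintro rfl; simp at h, if_neg fun hxy => ?_⟩
  rw [dist_eq_one_iff_adj.mpr hxy] at h
  omega

noncomputable def edgeTestFunction (X : SimpleGraph V) (u v : V) (q : ℝ) (r : ℕ) : V → ℝ :=
  truncGeomWeight q r ∘ X.edgeDist u v

lemma edgeTestFunction_nonneg {q : ℝ} (hq : 0 ≤ q) (r : ℕ) (x : V) :
    0 ≤ X.edgeTestFunction u v q r x :=
  truncGeomWeight_nonneg hq r _

@[simp] lemma edgeTestFunction_self (q : ℝ) (r : ℕ) : X.edgeTestFunction u v q r u = 1 := by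
  simp [edgeTestFunction, edgeDist]

lemma edgeDist_le_of_edgeTestFunction_ne_zero {q : ℝ} {r : ℕ}
    (h : X.edgeTestFunction u v q r x ≠ 0) : X.edgeDist u v x ≤ r :=
  not_lt.mp (mt truncGeomWeight_of_lt h)

variable [Fintype V]

lemma Connected.card_edgeDist_eq_zero_le (hX : X.Connected) :
    #{x | X.edgeDist u v x = 0} ≤ 2 := by
  classical
  calc #{x | X.edgeDist u v x = 0} ≤ #{u, v} := card_le_card fun x hx => by
        simpa [hX.edgeDist_eq_zero_iff] using hx
    _ ≤ 2 := card_le_two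

variable [DecidableRel X.Adj]

lemma IsRegularOfDegree.pos_of_adj (hreg : X.IsRegularOfDegree k) (huv : X.Adj u v) : 0 < k :=
  hreg u ▸ X.degree_pos_iff_exists_adj u |>.mpr ⟨v, huv⟩

lemma IsRegularOfDegree.card_adj_edgeDist_lt_le (hreg : X.IsRegularOfDegree k)
    (hX : X.Connected) (huv : X.Adj u v) (x : V) :
    #{y | X.Adj x y ∧ X.edgeDist u v x < X.edgeDist u v y} ≤ k - 1 := by
  classical
  obtain ⟨y₀, hxy₀, hy₀⟩ := hX.exists_adj_edgeDist_le huv x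
  calc #{y | X.Adj x y ∧ X.edgeDist u v x < X.edgeDist u v y}
      ≤ #((X.neighborFinset x).erase y₀) := by
        refine card_le_card fun y hy => ?_
        simp only [mem_filter, mem_univ, true_and] at hy
        simp only [mem_erase, mem_neighborFinset]
        exact ⟨by rintro rfl; omega, hy.1⟩
    _ = k - 1 := by
        rw [card_erase_of_mem ((mem_neighborFinset _ _ _).mpr hxy₀),
          card_neighborFinset_eq_degree, hreg x]

lemma IsRegularOfDegree.card_edgeDist_eq_add_one_le (hreg : X.IsRegularOfDegree k)
    (hX : X.Connected) (huv : X.Adj u v) (j : ℕ) :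
    #{x | X.edgeDist u v x = j + 1} ≤ (k - 1) * #{x | X.edgeDist u v x = j} := by
  classical
  calc #{x | X.edgeDist u v x = j + 1}
      ≤ #(({x | X.edgeDist u v x = j} : Finset V).biUnion
          fun y => {z | X.Adj y z ∧ X.edgeDist u v y < X.edgeDist u v z}) := by
        refine card_le_card fun x hx => ?_
        simp only [mem_filter, mem_univ, true_and] at hx
        obtain ⟨y, hxy, hy⟩ :=
          hX.exists_adj_edgeDist_add_one_eq (u := u) (v := v) (x := x) (by omega)
        simp only [mem_biUnion, mem_filter, mem_univ, true_and]
        exact ⟨y, by omega, hxy.symm, by omega⟩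
    _ ≤ ∑ y ∈ {x | X.edgeDist u v x = j}, (k - 1) :=
        card_biUnion_le.trans (sum_le_sum fun y _ => hreg.card_adj_edgeDist_lt_le hX huv y)
    _ = (k - 1) * #{x | X.edgeDist u v x = j} := by rw [sum_const, smul_eq_mul, mul_comm]

lemma IsRegularOfDegree.card_edgeDist_eq_le (hreg : X.IsRegularOfDegree k)
    (hX : X.Connected) (huv : X.Adj u v) (j : ℕ) :
    #{x | X.edgeDist u v x = j} ≤ 2 * (k - 1) ^ j := by
  induction j with
  | zero => simpa using hX.card_edgeDist_eq_zero_le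
  | succ j ih =>
    calc #{x | X.edgeDist u v x = j + 1} ≤ (k - 1) * #{x | X.edgeDist u v x = j} :=
          hreg.card_edgeDist_eq_add_one_le hX huv j
      _ ≤ (k - 1) * (2 * (k - 1) ^ j) := Nat.mul_le_mul_left _ ih
      _ = 2 * (k - 1) ^ (j + 1) := by ring

lemma IsRegularOfDegree.card_edgeDist_le_le (hreg : X.IsRegularOfDegree k)
    (hX : X.Connected) (huv : X.Adj u v) (R : ℕ) :
    #{x | X.edgeDist u v x ≤ R} ≤ 2 * (R + 1) * k ^ R := by
  have hk := hreg.pos_of_adj huv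
  rw [card_eq_sum_card_fiberwise (f := X.edgeDist u v) (t := range (R + 1))
    (s := ({x | X.edgeDist u v x ≤ R} : Finset V))
    fun x hx => mem_range.mpr (Nat.lt_succ_of_le (by simpa using hx))]
  calc ∑ j ∈ range (R + 1), #{x ∈ {x | X.edgeDist u v x ≤ R} | X.edgeDist u v x = j}
      ≤ ∑ j ∈ range (R + 1), 2 * k ^ R := sum_le_sum fun j hj => by
        rw [filter_filter]
        refine (card_le_card (monotone_filter_right _ fun _ _ hx => hx.2)).trans
          ((hreg.card_edgeDist_eq_le hX huv j).trans (Nat.mul_le_mul_left 2 ?_))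
        exact (Nat.pow_le_pow_left (Nat.sub_le k 1) j).trans
          (Nat.pow_le_pow_right hk (Nat.lt_succ_iff.mp (mem_range.mp hj)))
    _ = 2 * (R + 1) * k ^ R := by rw [sum_const, card_range, smul_eq_mul]; ring

lemma IsRegularOfDegree.antitoneOn_card_edgeDist_eq_mul_sq (hreg : X.IsRegularOfDegree k)
    (hX : X.Connected) (huv : X.Adj u v) {q : ℝ} (hq : q ≠ 0) (hqk : q ^ 2 = k - 1) (r : ℕ) :
    AntitoneOn (fun j => (#{x | X.edgeDist u v x = j} : ℝ) * truncGeomWeight q r j ^ 2)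
      (Set.Iic r) := by
  refine antitoneOn_of_succ_le Set.ordConnected_Iic fun j _ _ hj => ?_
  simp only [Order.succ_eq_add_one, Set.mem_Iic] at hj ⊢
  have hcard : (#{x | X.edgeDist u v x = j + 1} : ℝ) ≤ q ^ 2 * #{x | X.edgeDist u v x = j} := by
    rw [hqk, ← Nat.cast_pred (hreg.pos_of_adj huv), ← Nat.cast_mul]
    exact_mod_cast hreg.card_edgeDist_eq_add_one_le hX huv j
  calc (#{x | X.edgeDist u v x = j + 1} : ℝ) * truncGeomWeight q r (j + 1) ^ 2
      ≤ q ^ 2 * #{x | X.edgeDist u v x = j} * truncGeomWeight q r (j + 1) ^ 2 := by gcongr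
    _ = #{x | X.edgeDist u v x = j} * truncGeomWeight q r j ^ 2 := by
      rw [← mul_truncGeomWeight_add_one hq hj]
      ring

lemma IsRegularOfDegree.card_edgeDist_eq_mul_sq_le (hreg : X.IsRegularOfDegree k)
    (hX : X.Connected) (huv : X.Adj u v) {q : ℝ} (hq : q ≠ 0) (hqk : q ^ 2 = k - 1) (r : ℕ) :
    (r + 1) * (#{x | X.edgeDist u v x = r} * truncGeomWeight q r r ^ 2) ≤
      ∑ x, truncGeomWeight q r (X.edgeDist u v x) ^ 2 := by
  have hanti := hreg.antitoneOn_card_edgeDist_eq_mul_sq hX huv hq hqk r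
  calc (r + 1) * (#{x | X.edgeDist u v x = r} * truncGeomWeight q r r ^ 2)
      = ∑ j ∈ range (r + 1),
          (#{x | X.edgeDist u v x = r} : ℝ) * truncGeomWeight q r r ^ 2 := by
        simp
    _ ≤ ∑ j ∈ range (r + 1),
          (#{x | X.edgeDist u v x = j} : ℝ) * truncGeomWeight q r j ^ 2 := by
        refine sum_le_sum fun j hj => hanti ?_ (Set.mem_Iic.mpr le_rfl) ?_ <;>
          simpa [Nat.lt_succ_iff] using hj
    _ = ∑ j ∈ range (r + 1), ∑ x with X.edgeDist u v x = j, truncGeomWeight q r j ^ 2 := by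
        simp
    _ = ∑ x with X.edgeDist u v x ∈ range (r + 1), truncGeomWeight q r (X.edgeDist u v x) ^ 2 :=
        sum_fiberwise_eq_sum_filter' _ _ _ _
    _ ≤ ∑ x, truncGeomWeight q r (X.edgeDist u v x) ^ 2 :=
        sum_le_sum_of_subset_of_nonneg (subset_univ _) fun _ _ _ => sq_nonneg _

lemma IsRegularOfDegree.exists_lt_edgeDist (hreg : X.IsRegularOfDegree k) (hX : X.Connected)
    (huv : X.Adj u v) {R : ℕ} (hcard : 2 * (R + 1) * k ^ R < Fintype.card V) :
    ∃ z, R < X.edgeDist u v z := by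
  by_contra! h
  have := hreg.card_edgeDist_le_le hX huv R
  rw [filter_true_of_mem fun x _ => h x, card_univ] at this
  omega

theorem IsRegularOfDegree.dotProduct_adjMatrix_mulVec (hreg : X.IsRegularOfDegree k)
    (f : V → ℝ) : f ⬝ᵥ (X.adjMatrix ℝ *ᵥ f) =
      k * (f ⬝ᵥ f) - (∑ x, ∑ y, if X.Adj x y then (f x - f y) ^ 2 else 0) / 2 := by
  classical
  have hdeg : f ⬝ᵥ (X.degMatrix ℝ *ᵥ f) = k * (f ⬝ᵥ f) := by
    rw [dotProduct_mulVec_degMatrix]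
    simp [hreg _, dotProduct, mul_sum, mul_assoc]
  rw [← lapMatrix_toLinearMap₂', toLinearMap₂'_apply', lapMatrix, sub_mulVec, dotProduct_sub,
    hdeg]
  ring

theorem sum_adj_sq_sub_comp_eq_two_mul_sum_lt {α : Type*} [LinearOrder α] (w : α → ℝ)
    (d : V → α) :
    ∑ x, ∑ y, (if X.Adj x y then (w (d x) - w (d y)) ^ 2 else 0) =
      2 * ∑ x, ∑ y, if X.Adj x y ∧ d x < d y then (w (d x) - w (d y)) ^ 2 else 0 := by
  have hsplit : ∀ x y, (if X.Adj x y then (w (d x) - w (d y)) ^ 2 else 0) =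
      (if X.Adj x y ∧ d x < d y then (w (d x) - w (d y)) ^ 2 else 0) +
        if X.Adj y x ∧ d y < d x then (w (d y) - w (d x)) ^ 2 else 0 := by
    intro x y
    simp only [X.adj_comm y x]
    rcases lt_trichotomy (d x) (d y) with h | h | h
    · simp [h, h.not_gt]
    · simp [h]
    · simp only [h, h.not_gt, and_false, and_true, if_false, zero_add]
      split_ifs <;> ring
  simp_rw [hsplit, sum_add_distrib]
  rw [sum_comm (f := fun x y => if X.Adj y x ∧ d y < d x then (w (d y) - w (d x)) ^ 2 else 0)]
  ring

theorem IsRegularOfDegree.sum_le_dotProduct_adjMatrix_mulVec_comp_edgeDist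
    (hreg : X.IsRegularOfDegree k) (hX : X.Connected) (huv : X.Adj u v) (w : ℕ → ℝ) :
    ∑ x, (k * w (X.edgeDist u v x) ^ 2 -
        (k - 1) * (w (X.edgeDist u v x) - w (X.edgeDist u v x + 1)) ^ 2) ≤
      (w ∘ X.edgeDist u v) ⬝ᵥ (X.adjMatrix ℝ *ᵥ (w ∘ X.edgeDist u v)) := by
  set d := X.edgeDist u v
  have hk1 : ((k - 1 : ℕ) : ℝ) = k - 1 := Nat.cast_pred (hreg.pos_of_adj huv)
  have hout : ∀ x, (∑ y, if X.Adj x y ∧ d x < d y then (w (d x) - w (d y)) ^ 2 else 0) ≤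
      (k - 1) * (w (d x) - w (d x + 1)) ^ 2 := fun x => calc
    _ = ∑ y, if X.Adj x y ∧ d x < d y then (w (d x) - w (d x + 1)) ^ 2 else 0 := by
        refine sum_congr rfl fun y _ => ?_
        split_ifs with h
        · have : d y ≤ d x + 1 := hX.edgeDist_le_add_one_of_adj h.1
          rw [show d y = d x + 1 by omega]
        · rfl
    _ = #{y | X.Adj x y ∧ d x < d y} * (w (d x) - w (d x + 1)) ^ 2 := by
        rw [← sum_filter, sum_const, nsmul_eq_mul]
    _ ≤ (k - 1) * (w (d x) - w (d x + 1)) ^ 2 := by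
        gcongr
        rw [← hk1]
        exact_mod_cast hreg.card_adj_edgeDist_lt_le hX huv x
  rw [hreg.dotProduct_adjMatrix_mulVec]
  simp only [dotProduct, Function.comp_apply, ← sq]
  rw [sum_adj_sq_sub_comp_eq_two_mul_sum_lt w d, sum_sub_distrib, ← mul_sum]
  linarith [sum_le_sum fun x (_ : x ∈ univ) => hout x]

theorem IsRegularOfDegree.rayleigh_edgeTestFunction_ge (hreg : X.IsRegularOfDegree k)
    (hX : X.Connected) (huv : X.Adj u v) {q : ℝ} (hq : 1 / 2 ≤ q) (hqk : q ^ 2 = k - 1)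
    (r : ℕ) :
    (2 * q - (2 * q - 1) / (r + 1)) *
        (X.edgeTestFunction u v q r ⬝ᵥ X.edgeTestFunction u v q r) ≤
      X.edgeTestFunction u v q r ⬝ᵥ (X.adjMatrix ℝ *ᵥ X.edgeTestFunction u v q r) := by
  have hq0 : q ≠ 0 := by positivity
  set w := truncGeomWeight q r
  set d := X.edgeDist u v
  set S := ∑ x, w (d x) ^ 2
  set M := (#{x | d x = r} : ℝ) * w r ^ 2
  have hff : X.edgeTestFunction u v q r ⬝ᵥ X.edgeTestFunction u v q r = S := by
    simp only [edgeTestFunction, dotProduct, Function.comp_apply, sq, S, w, d]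
  have hlocal : ∑ x, (k * w (d x) ^ 2 - (k - 1) * (w (d x) - w (d x + 1)) ^ 2) =
      2 * q * S - (2 * q - 1) * M := by
    have hpt : ∀ x, (k : ℝ) * w (d x) ^ 2 - (k - 1) * (w (d x) - w (d x + 1)) ^ 2 =
        2 * q * w (d x) ^ 2 - if d x = r then (2 * q - 1) * w r ^ 2 else 0 := fun x => by
      rw [show (k : ℝ) = q ^ 2 + 1 by linarith, add_sub_cancel_right]
      exact truncGeomWeight_sq_identity hq0 r (d x)
    rw [sum_congr rfl fun x _ => hpt x, sum_sub_distrib, ← mul_sum, ← sum_filter, sum_const,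
      nsmul_eq_mul]
    ring
  have hM : (r + 1) * M ≤ S := hreg.card_edgeDist_eq_mul_sq_le hX huv hq0 hqk r
  have hMS : (2 * q - 1) * M ≤ (2 * q - 1) / (r + 1) * S := by
    rw [div_mul_eq_mul_div, le_div_iff₀ (by positivity)]
    nlinarith
  rw [hff]
  calc (2 * q - (2 * q - 1) / (r + 1)) * S ≤ 2 * q * S - (2 * q - 1) * M := by
        linarith
    _ ≤ _ := hlocal ▸ hreg.sum_le_dotProduct_adjMatrix_mulVec_comp_edgeDist hX huv w

theorem IsRegularOfDegree.apply_eq_of_adjMatrix_mulVec_eq (hreg : X.IsRegularOfDegree k)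
    (hX : X.Connected) {w : V → ℝ} (hw : X.adjMatrix ℝ *ᵥ w = (k : ℝ) • w) (x y : V) :
    w x = w y := by
  classical
  refine X.lapMatrix_mulVec_eq_zero_iff_forall_reachable.mp ?_ x y (hX x y)
  ext z
  have := congrFun hw z
  simp only [adjMatrix_mulVec_apply, Pi.smul_apply, smul_eq_mul] at this
  simp [lapMatrix_mulVec_apply, hreg z, this]

theorem IsRegularOfDegree.le_lambdaOne (hreg : X.IsRegularOfDegree k) (hX : X.Connected)
    {f : V → ℝ} (hf0 : f ≠ 0) (hf : ∑ x, f x = 0) {c : ℝ}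
    (hc : c * (f ⬝ᵥ f) ≤ f ⬝ᵥ (X.adjMatrix ℝ *ᵥ f)) : c ≤ X.lambdaOne k := by
  classical
  have hf' : ∀ w, X.adjMatrix ℝ *ᵥ w = (k : ℝ) • w → w ⬝ᵥ f = 0 := fun w hw => by
    obtain ⟨x₀⟩ := hX.nonempty
    simp [dotProduct, hreg.apply_eq_of_adjMatrix_mulVec_eq hX hw _ x₀, ← mul_sum, hf]
  obtain ⟨ν, hν, hνk, hcν⟩ :=
    (X.isHermitian_adjMatrix ℝ).exists_isEigenvalue_ne_ge hf0 hf' hc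
  exact hcν.trans (le_csSup (bddAbove_setOf_isEigenvalue _) ⟨hν, hνk⟩)

theorem IsRegularOfDegree.two_mul_sqrt_sub_div_le_lambdaOne (hreg : X.IsRegularOfDegree k)
    (hX : X.Connected) (hk : 2 ≤ k) (r : ℕ)
    (hcard : 2 * (2 * r + 3) * k ^ (2 * r + 2) < Fintype.card V) :
    2 * √(k - 1 : ℝ) - (2 * √(k - 1 : ℝ) - 1) / (r + 1) ≤ X.lambdaOne k := by
  obtain ⟨u⟩ := hX.nonempty
  obtain ⟨v, huv⟩ := (X.degree_pos_iff_exists_adj u).mp (by rw [hreg u]; omega)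
  obtain ⟨z, hz⟩ := hreg.exists_lt_edgeDist hX huv (R := 2 * r + 2) hcard
  obtain ⟨z', hzz'⟩ := (X.degree_pos_iff_exists_adj z).mp (by rw [hreg z]; omega)
  set q := √(k - 1 : ℝ)
  have hk' : (2 : ℝ) ≤ k := by exact_mod_cast hk
  have hqk : q ^ 2 = k - 1 := Real.sq_sqrt (by linarith)
  have hq : 1 / 2 ≤ q := Real.le_sqrt_of_sq_le (by linarith)
  have hsep : ∀ x y, X.edgeTestFunction u v q r x ≠ 0 →
      X.edgeTestFunction z z' q r y ≠ 0 → x ≠ y ∧ X.adjMatrix ℝ x y = 0 :=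
    fun _ _ hx hy => ne_and_adjMatrix_eq_zero_of_two_le_dist <|
      hX.two_le_dist_of_edgeDist_le hz hzz' (edgeDist_le_of_edgeTestFunction_ne_zero hx)
        (edgeDist_le_of_edgeTestFunction_ne_zero hy)
  have hsum : ∑ x, X.edgeTestFunction z z' q r x ≠ 0 :=
    (sum_pos' (fun x _ => edgeTestFunction_nonneg (by linarith) r x)
      ⟨z, mem_univ z, by simp⟩).ne'
  have hne : X.edgeTestFunction u v q r ≠ 0 := fun h => by simpa using congrFun h u
  obtain ⟨f, hf0, hf, hc⟩ := X.isSymm_adjMatrix.exists_sum_eq_zero_le_dotProduct_mulVec hne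
    hsum hsep (hreg.rayleigh_edgeTestFunction_ge hX huv hq hqk r)
    (hreg.rayleigh_edgeTestFunction_ge hX hzz' hq hqk r)
  exact hreg.le_lambdaOne hX hf0 hf hc

end SimpleGraph

/-- Alon–Boppana: for every `k ≥ 3` and `ε > 0` there is `N` such that every finite
connected `k`-regular graph on more than `N` vertices has `λ₁ ≥ 2√(k-1) - ε`. -/
theorem alon_boppana (k : ℕ) (hk : 3 ≤ k) (ε : ℝ) (hε : 0 < ε) :
    ∃ N : ℕ, ∀ (V : Type) (_ : Fintype V) (X : SimpleGraph V)
      (_ : DecidableRel X.Adj),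
      X.Connected → X.IsRegularOfDegree k → N < Fintype.card V →
      2 * Real.sqrt ((k : ℝ) - 1) - ε ≤ X.lambdaOne k := by
  set q := √((k : ℝ) - 1)
  obtain ⟨r, hr⟩ := exists_nat_gt ((2 * q - 1) / ε)
  have hrε : (2 * q - 1) / (r + 1) ≤ ε := by
    rw [div_lt_iff₀ hε] at hr
    rw [div_le_iff₀ (by positivity)]
    nlinarith
  refine ⟨2 * (2 * r + 3) * k ^ (2 * r + 2), fun V _ X _ hX hreg hcard => ?_⟩
  have := hreg.two_mul_sqrt_sub_div_le_lambdaOne hX (by omega) r hcard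
  linarith
end

section
/- (Kesten) The spectrum of the adjacency operator A acting on ℓ²(T_k), for the infinite k-regular tree T_k, is exactly the interval [−2√(k−1), 2√(k−1)]. -/
/-!
Upper bound: the Schur test with the weight `(k - 1) ^ (-d(v₀, v) / 2)`, whose sum over the
neighbours of `v` is at most `2√(k - 1)` times its value at `v`, gives `‖A‖ ≤ 2√(k - 1)`.

Lower bound: if some `μ` with `|μ| ≤ 2√(k - 1)` were outside the spectrum, then
`g = (μ - A)⁻¹ δ_{v₀}` would be square-summable. Summing `μ g - A g = δ_{v₀}` over the spheres
around `v₀` shows that the sphere sums `s n` satisfy `μ s n = (k - 1) s (n - 1) + s (n + 1)` for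
`n ≥ 2`, so `t n = s n / √(k - 1) ^ n` satisfies `t (n + 1) + t (n - 1) = c t n` with
`c = μ / √(k - 1)`, `|c| ≤ 2`. Since a sphere has at most `2 (k - 1) ^ n` vertices,
Cauchy–Schwarz gives `t n → 0`. For `|c| ≤ 2` the conserved quantity
`t n ^ 2 + t (n + 1) ^ 2 - c t n t (n + 1)` dominates `(|t n| - |t (n + 1)|) ^ 2`, which forces
`t n = 0` for `n ≥ 1`; the equations on the first sphere and at the root then give `0 = 1`.
-/

open Finset Filter Function Topology
open scoped ENNReal

theorem eq_zero_of_tendsto_zero_of_add_eq_mul {u : ℕ → ℝ} {c : ℝ} (hc : |c| ≤ 2)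
    (hrec : ∀ n, u (n + 2) + u n = c * u (n + 1)) (hu : Tendsto u atTop (𝓝 0)) (n : ℕ) :
    u n = 0 := by
  set E : ℕ → ℝ := fun n => u n ^ 2 + u (n + 1) ^ 2 - c * u n * u (n + 1)
  have hu₁ : Tendsto (fun n => u (n + 1)) atTop (𝓝 0) := hu.comp (tendsto_add_atTop_nat 1)
  have hE_const : ∀ n, E n = E 0 := by
    intro n
    induction n with
    | zero => rfl
    | succ n ih => rw [← ih]; linear_combination (u (n + 2) - u n) * hrec n
  have hE_lim : Tendsto E atTop (𝓝 0) := by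
    simpa using ((hu.pow 2).add (hu₁.pow 2)).sub ((hu.const_mul c).mul hu₁)
  have hE : ∀ n, E n = 0 := fun n => (hE_const n).trans <|
    tendsto_nhds_unique (tendsto_const_nhds.congr fun m => (hE_const m).symm) hE_lim
  have habs_succ : ∀ n, |u (n + 1)| = |u n| := by
    intro n
    have hcuu : c * u n * u (n + 1) ≤ 2 * |u n| * |u (n + 1)| := by
      calc c * u n * u (n + 1) ≤ |c| * |u n| * |u (n + 1)| := by
            rw [← abs_mul, ← abs_mul]; exact le_abs_self _
        _ ≤ 2 * |u n| * |u (n + 1)| := by gcongr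
    have hsq : (|u n| - |u (n + 1)|) ^ 2 = 0 := by
      refine le_antisymm ?_ (sq_nonneg _)
      have := hE n
      nlinarith [sq_abs (u n), sq_abs (u (n + 1))]
    linarith [pow_eq_zero_iff (n := 2) two_ne_zero |>.mp hsq]
  have habs : ∀ n, |u n| = |u 0| := fun n => by
    induction n with
    | zero => rfl
    | succ n ih => rw [habs_succ, ih]
  have h0 : |u 0| = 0 :=
    tendsto_nhds_unique (tendsto_const_nhds.congr fun n => (habs n).symm) (by simpa using hu.abs)
  rw [← abs_eq_zero, habs, h0]

theorem Summable.tendsto_sum_of_pairwise_disjoint {V : Type*} {f : V → ℝ} (hf : Summable f)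
    (hf₀ : ∀ v, 0 ≤ f v) {s : ℕ → Finset V} (hs : Pairwise (Disjoint on s)) :
    Tendsto (fun n => ∑ v ∈ s n, f v) atTop (𝓝 0) := by
  classical
  refine (summable_of_sum_range_le (c := ∑' v, f v) (fun n => sum_nonneg fun v _ => hf₀ v)
    fun n => ?_).tendsto_atTop_zero
  rw [← sum_biUnion fun m _ n _ hmn => hs hmn]
  exact hf.sum_le_tsum _ fun v _ => hf₀ v

lemma lp.ofReal_norm_sq_eq_tsum {ι : Type*} {E : ι → Type*} [∀ i, NormedAddCommGroup (E i)]
    [∀ i, InnerProductSpace ℝ (E i)] (f : lp E 2) :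
    ENNReal.ofReal (‖f‖ ^ 2) = ∑' i, ENNReal.ofReal (‖f i‖ ^ 2) := by
  have hf : HasSum (fun i => ‖f i‖ ^ 2) (‖f‖ ^ 2) := by
    simpa only [real_inner_self_eq_norm_sq] using lp.hasSum_inner (𝕜 := ℝ) f f
  rw [← hf.tsum_eq, ENNReal.ofReal_tsum_of_nonneg (fun i => sq_nonneg _) hf.summable]

namespace SimpleGraph

variable {V : Type*} {G : SimpleGraph V}

lemma exists_adj_dist_eq_of_dist_eq_succ {v₀ v : V} {n : ℕ} (hv : G.dist v₀ v = n + 1) :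
    ∃ u, G.Adj u v ∧ G.dist v₀ u = n := by
  obtain ⟨p, hp⟩ := exists_walk_of_dist_ne_zero (hv.trans_ne n.succ_ne_zero)
  have hnil : ¬ p.Nil := by rw [← Walk.length_eq_zero_iff]; omega
  have hadj := p.adj_penultimate hnil
  have hle := dist_le p.dropLast
  have hge := hadj.reachable.dist_triangle_right v₀
  rw [Walk.length_dropLast] at hle
  rw [dist_eq_one_iff_adj.mpr hadj] at hge
  exact ⟨p.penultimate, hadj, by omega⟩

lemma IsTree.eq_of_adj_of_dist_add_one_eq (hG : G.IsTree) {v₀ v u₁ u₂ : V}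
    (h₁ : G.Adj u₁ v) (h₂ : G.Adj u₂ v) (hd₁ : G.dist v₀ u₁ + 1 = G.dist v₀ v)
    (hd₂ : G.dist v₀ u₂ + 1 = G.dist v₀ v) : u₁ = u₂ := by
  obtain ⟨p, hp, -⟩ := hG.connected.exists_path_of_dist v₀ v
  have key : ∀ u, G.Adj u v → G.dist v₀ u + 1 = G.dist v₀ v → u = p.penultimate := by
    intro u hu hd
    obtain ⟨q, hq, hql⟩ := hG.connected.exists_path_of_dist v₀ u
    have hvq : v ∉ q.support := fun hv => by
      classical
      have := (dist_le (q.takeUntil v hv)).trans (q.length_takeUntil_le_length hv)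
      omega
    exact hG.isAcyclic.eq_penultimate_of_adj_end hp hu.symm
      (hG.isAcyclic.mem_support_of_ne_mem_support_of_adj_of_isPath hp hq hu.symm hvq)
  rw [key u₁ h₁ hd₁, key u₂ h₂ hd₂]

section LocallyFinite

variable [G.LocallyFinite]

lemma tsum_sum_neighborFinset_comm (F : V → V → ℝ≥0∞) :
    ∑' v, ∑ w ∈ G.neighborFinset v, F v w = ∑' w, ∑ v ∈ G.neighborFinset w, F v w := by
  classical
  simp_rw [fun v => sum_eq_tsum_indicator (F v) (G.neighborFinset v),
    fun w => sum_eq_tsum_indicator (F · w) (G.neighborFinset w)]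
  rw [ENNReal.tsum_comm]
  refine tsum_congr fun w => tsum_congr fun v => ?_
  simp only [coe_neighborFinset, Set.indicator_apply, mem_neighborSet, adj_comm]

theorem opNorm_le_of_sum_neighborFinset_le
    (A : lp (fun _ : V => ℝ) 2 →L[ℝ] lp (fun _ : V => ℝ) 2)
    (hA : ∀ f v, A f v = ∑ w ∈ G.neighborFinset v, f w) {M : ℝ} (hM : 0 ≤ M)
    {h : V → ℝ} (hpos : ∀ v, 0 < h v) (hh : ∀ v, ∑ w ∈ G.neighborFinset v, h w ≤ M * h v) :
    ‖A‖ ≤ M := by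
  refine A.opNorm_le_bound hM fun f => ?_
  have hquot : ∀ w, 0 ≤ ‖f w‖ ^ 2 / h w := fun w => div_nonneg (sq_nonneg _) (hpos w).le
  have hterm : ∀ v w, 0 ≤ h v * (‖f w‖ ^ 2 / h w) := fun v w =>
    mul_nonneg (hpos v).le (hquot w)
  set F : V → V → ℝ≥0∞ := fun v w => ENNReal.ofReal (h v * (‖f w‖ ^ 2 / h w))
  have hrow : ∀ v, ENNReal.ofReal (‖A f v‖ ^ 2) ≤
      ENNReal.ofReal M * ∑ w ∈ G.neighborFinset v, F v w := by
    intro v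
    rw [← ENNReal.ofReal_sum_of_nonneg fun w _ => hterm v w, ← ENNReal.ofReal_mul hM]
    refine ENNReal.ofReal_le_ofReal ?_
    have hcs := sum_sq_le_sum_mul_sum_of_sq_le_mul (G.neighborFinset v) (r := fun w => ‖f w‖)
      (f := h) (g := fun w => ‖f w‖ ^ 2 / h w) (fun w _ => (hpos w).le) (fun w _ => hquot w)
      (fun w _ => by rw [mul_div_cancel₀ _ (hpos w).ne'])
    calc ‖A f v‖ ^ 2 ≤ (∑ w ∈ G.neighborFinset v, ‖f w‖) ^ 2 := by
          gcongr
          rw [hA]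
          exact norm_sum_le _ _
      _ ≤ (M * h v) * ∑ w ∈ G.neighborFinset v, ‖f w‖ ^ 2 / h w :=
          hcs.trans (mul_le_mul_of_nonneg_right (hh v) (sum_nonneg fun w _ => hquot w))
      _ = M * ∑ w ∈ G.neighborFinset v, h v * (‖f w‖ ^ 2 / h w) := by
          rw [mul_assoc, mul_sum]
  have hcol : ∀ w, ∑ v ∈ G.neighborFinset w, F v w ≤ ENNReal.ofReal (M * ‖f w‖ ^ 2) := by
    intro w
    rw [← ENNReal.ofReal_sum_of_nonneg fun v _ => hterm v w, ← sum_mul]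
    refine ENNReal.ofReal_le_ofReal ?_
    calc (∑ v ∈ G.neighborFinset w, h v) * (‖f w‖ ^ 2 / h w)
        ≤ M * h w * (‖f w‖ ^ 2 / h w) := mul_le_mul_of_nonneg_right (hh w) (hquot w)
      _ = M * ‖f w‖ ^ 2 := by field_simp [(hpos w).ne']
  rw [← sq_le_sq₀ (norm_nonneg _) (by positivity),
    ← ENNReal.ofReal_le_ofReal_iff (by positivity), lp.ofReal_norm_sq_eq_tsum]
  calc ∑' v, ENNReal.ofReal (‖A f v‖ ^ 2)
      ≤ ∑' v, ENNReal.ofReal M * ∑ w ∈ G.neighborFinset v, F v w :=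
        ENNReal.tsum_le_tsum hrow
    _ = ENNReal.ofReal M * ∑' w, ∑ v ∈ G.neighborFinset w, F v w := by
        rw [ENNReal.tsum_mul_left, tsum_sum_neighborFinset_comm]
    _ ≤ ENNReal.ofReal M * ∑' w, ENNReal.ofReal (M * ‖f w‖ ^ 2) := by
        gcongr with w
        exact hcol w
    _ = ENNReal.ofReal ((M * ‖f‖) ^ 2) := by
        simp_rw [ENNReal.ofReal_mul hM]
        rw [ENNReal.tsum_mul_left, ← lp.ofReal_norm_sq_eq_tsum, ← mul_assoc,
          ← ENNReal.ofReal_mul hM, ← ENNReal.ofReal_mul (by positivity)]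
        ring_nf

variable [DecidableEq V]

-- Built by breadth-first search, so that it is a `Finset` in every locally finite graph.
variable (G) in
noncomputable def distSphere (v₀ : V) : ℕ → Finset V
  | 0 => {v₀}
  | n + 1 => {w ∈ (distSphere v₀ n).biUnion (G.neighborFinset ·) | G.dist v₀ w = n + 1}

variable (G) in
lemma sum_sum_neighborFinset_inter {M : Type*} [AddCommMonoid M] (s t : Finset V)
    (g : V → M) :
    ∑ v ∈ s, ∑ w ∈ G.neighborFinset v ∩ t, g w =
      ∑ w ∈ t, #(G.neighborFinset w ∩ s) • g w := by
  rw [sum_comm' (t' := t) (s' := fun w => G.neighborFinset w ∩ s)]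
  · exact sum_congr rfl fun w _ => sum_const _
  · simp only [mem_inter, mem_neighborFinset, adj_comm]
    tauto

variable {v₀ : V}

lemma mem_distSphere (hG : G.Connected) {v : V} {n : ℕ} :
    v ∈ G.distSphere v₀ n ↔ G.dist v₀ v = n := by
  induction n generalizing v with
  | zero => simp [distSphere, hG.dist_eq_zero_iff, eq_comm]
  | succ n ih =>
    simp only [distSphere, mem_filter, mem_biUnion, mem_neighborFinset, ih, and_iff_right_iff_imp]
    intro hv
    obtain ⟨u, hu, hdu⟩ := exists_adj_dist_eq_of_dist_eq_succ hv
    exact ⟨u, hdu, hu⟩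

lemma neighborFinset_eq_distSphere_one (hG : G.Connected) :
    G.neighborFinset v₀ = G.distSphere v₀ 1 := by
  ext v
  rw [mem_distSphere hG, mem_neighborFinset, dist_eq_one_iff_adj]

lemma disjoint_distSphere (hG : G.Connected) {m n : ℕ} (h : m ≠ n) :
    Disjoint (G.distSphere v₀ m) (G.distSphere v₀ n) := by
  rw [Finset.disjoint_left]
  intro v hm hn
  rw [mem_distSphere hG] at hm hn
  exact h (hm.symm.trans hn)

variable {v : V} {n : ℕ}

lemma IsTree.neighborFinset_eq_union (hG : G.IsTree) (hv : v ∈ G.distSphere v₀ (n + 1)) :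
    G.neighborFinset v = G.neighborFinset v ∩ G.distSphere v₀ n ∪
      G.neighborFinset v ∩ G.distSphere v₀ (n + 2) := by
  rw [← inter_union_distrib_left, eq_comm, inter_eq_left]
  intro w hw
  rw [mem_neighborFinset] at hw
  rw [mem_distSphere hG.connected] at hv
  rw [mem_union, mem_distSphere hG.connected, mem_distSphere hG.connected]
  have := hG.dist_eq_dist_add_one_of_adj v₀ hw
  omega

lemma IsTree.sum_neighborFinset_eq_add (hG : G.IsTree) (hv : v ∈ G.distSphere v₀ (n + 1))
    {M : Type*} [AddCommMonoid M] (g : V → M) :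
    ∑ w ∈ G.neighborFinset v, g w = ∑ w ∈ G.neighborFinset v ∩ G.distSphere v₀ n, g w +
      ∑ w ∈ G.neighborFinset v ∩ G.distSphere v₀ (n + 2), g w := by
  have hdisj := disjoint_distSphere (v₀ := v₀) hG.connected (m := n) (n := n + 2) (by omega)
  rw [← sum_union (hdisj.mono inter_subset_right inter_subset_right),
    ← hG.neighborFinset_eq_union hv]

lemma IsTree.card_neighborFinset_inter_distSphere_pred (hG : G.IsTree)
    (hv : v ∈ G.distSphere v₀ (n + 1)) : #(G.neighborFinset v ∩ G.distSphere v₀ n) = 1 := by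
  rw [mem_distSphere hG.connected] at hv
  obtain ⟨u, hu, hdu⟩ := exists_adj_dist_eq_of_dist_eq_succ hv
  rw [card_eq_one]
  refine ⟨u, ext fun w => ?_⟩
  rw [mem_inter, mem_neighborFinset, mem_distSphere hG.connected, mem_singleton]
  constructor
  · rintro ⟨hw, hdw⟩
    exact hG.eq_of_adj_of_dist_add_one_eq (v₀ := v₀) hw.symm hu (by omega) (by omega)
  · rintro rfl
    exact ⟨hu.symm, hdu⟩

lemma IsTree.card_neighborFinset_inter_distSphere_succ {k : ℕ} (hG : G.IsTree)
    (hreg : G.IsRegularOfDegree k) (hv : v ∈ G.distSphere v₀ (n + 1)) :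
    #(G.neighborFinset v ∩ G.distSphere v₀ (n + 2)) = k - 1 := by
  have hdisj := disjoint_distSphere (v₀ := v₀) hG.connected (m := n) (n := n + 2) (by omega)
  have hcard := congrArg card (hG.neighborFinset_eq_union hv)
  rw [card_union_of_disjoint (hdisj.mono inter_subset_right inter_subset_right),
    hG.card_neighborFinset_inter_distSphere_pred hv, card_neighborFinset_eq_degree,
    hreg v] at hcard
  omega

lemma IsTree.card_distSphere_succ {k : ℕ} (hG : G.IsTree) (hreg : G.IsRegularOfDegree k)
    (n : ℕ) : #(G.distSphere v₀ (n + 1)) = k * (k - 1) ^ n := by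
  induction n with
  | zero =>
    rw [← neighborFinset_eq_distSphere_one hG.connected, card_neighborFinset_eq_degree, hreg v₀,
      pow_zero, mul_one]
  | succ n ih =>
    have h := sum_sum_neighborFinset_inter G (G.distSphere v₀ (n + 1)) (G.distSphere v₀ (n + 2))
      (1 : V → ℕ)
    simp only [Pi.one_apply, smul_eq_mul, mul_one, ← card_eq_sum_ones] at h
    rw [sum_congr rfl fun v hv => hG.card_neighborFinset_inter_distSphere_succ hreg hv,
      sum_congr rfl fun w hw => hG.card_neighborFinset_inter_distSphere_pred hw] at h
    simp only [sum_const, smul_eq_mul, mul_one] at h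
    rw [← h, ih, pow_succ, mul_assoc]

section SphereSums

variable {M : Type*} [AddCommMonoid M] (g : V → M)

lemma IsTree.sum_distSphere_sum_neighborFinset (hG : G.IsTree) (n : ℕ) :
    ∑ v ∈ G.distSphere v₀ (n + 1), ∑ w ∈ G.neighborFinset v, g w =
      ∑ w ∈ G.distSphere v₀ n, #(G.neighborFinset w ∩ G.distSphere v₀ (n + 1)) • g w +
        ∑ w ∈ G.distSphere v₀ (n + 2), g w := by
  rw [sum_congr rfl fun v hv => hG.sum_neighborFinset_eq_add hv g, sum_add_distrib,
    sum_sum_neighborFinset_inter, sum_sum_neighborFinset_inter]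
  congr 1
  exact sum_congr rfl fun w hw => by rw [hG.card_neighborFinset_inter_distSphere_pred hw, one_smul]

lemma IsTree.sum_distSphere_one_sum_neighborFinset {k : ℕ} (hG : G.IsTree)
    (hreg : G.IsRegularOfDegree k) :
    ∑ v ∈ G.distSphere v₀ 1, ∑ w ∈ G.neighborFinset v, g w =
      k • g v₀ + ∑ w ∈ G.distSphere v₀ 2, g w := by
  rw [hG.sum_distSphere_sum_neighborFinset, distSphere, sum_singleton,
    ← neighborFinset_eq_distSphere_one hG.connected, inter_self, card_neighborFinset_eq_degree,
    hreg v₀]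

lemma IsTree.sum_distSphere_add_two_sum_neighborFinset {k : ℕ} (hG : G.IsTree)
    (hreg : G.IsRegularOfDegree k) (n : ℕ) :
    ∑ v ∈ G.distSphere v₀ (n + 2), ∑ w ∈ G.neighborFinset v, g w =
      (k - 1) • ∑ w ∈ G.distSphere v₀ (n + 1), g w +
        ∑ w ∈ G.distSphere v₀ (n + 3), g w := by
  rw [hG.sum_distSphere_sum_neighborFinset, smul_sum]
  congr 1
  exact sum_congr rfl fun w hw => by rw [hG.card_neighborFinset_inter_distSphere_succ hreg hw]

end SphereSums

lemma IsTree.sum_neighborFinset_inv_sqrt_pow_dist_le {k : ℕ} (hk : 2 ≤ k) (hG : G.IsTree)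
    (hreg : G.IsRegularOfDegree k) (v : V) :
    ∑ w ∈ G.neighborFinset v, (√(k - 1 : ℝ))⁻¹ ^ G.dist v₀ w ≤
      2 * √(k - 1 : ℝ) * (√(k - 1 : ℝ))⁻¹ ^ G.dist v₀ v := by
  have hk' : (2 : ℝ) ≤ k := by exact_mod_cast hk
  set q := √(k - 1 : ℝ)
  have hq : 0 < q := Real.sqrt_pos.mpr (by linarith)
  have hq2 : q ^ 2 = k - 1 := Real.sq_sqrt (by linarith)
  cases hd : G.dist v₀ v with
  | zero =>
    obtain rfl : v₀ = v := hG.connected.dist_eq_zero_iff.mp hd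
    have hconst : ∀ w ∈ G.neighborFinset v₀, q⁻¹ ^ G.dist v₀ w = q⁻¹ := fun w hw => by
      rw [dist_eq_one_iff_adj.mpr ((mem_neighborFinset _ _ _).mp hw), pow_one]
    rw [sum_congr rfl hconst, sum_const, card_neighborFinset_eq_degree, hreg v₀, nsmul_eq_mul,
      pow_zero, mul_one, ← div_eq_mul_inv, div_le_iff₀ hq, mul_assoc, ← sq, hq2]
    linarith
  | succ n =>
    have hv : v ∈ G.distSphere v₀ (n + 1) := (mem_distSphere hG.connected).mpr hd
    have hconst : ∀ m, ∀ w ∈ G.neighborFinset v ∩ G.distSphere v₀ m,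
        q⁻¹ ^ G.dist v₀ w = q⁻¹ ^ m :=
      fun m w hw => by rw [(mem_distSphere hG.connected).mp (mem_inter.mp hw).2]
    rw [hG.sum_neighborFinset_eq_add hv, sum_congr rfl (hconst n), sum_congr rfl (hconst (n + 2)),
      sum_const, sum_const, hG.card_neighborFinset_inter_distSphere_pred hv,
      hG.card_neighborFinset_inter_distSphere_succ hreg hv, one_smul, nsmul_eq_mul,
      Nat.cast_sub (by omega), Nat.cast_one, ← hq2]
    apply le_of_eq
    simp only [pow_succ, inv_pow]
    field_simp
    ring

lemma IsTree.tendsto_sum_distSphere_div_sqrt_pow {k : ℕ} (hk : 2 ≤ k) (hG : G.IsTree)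
    (hreg : G.IsRegularOfDegree k) {g : V → ℝ} (hg : Summable fun v => g v ^ 2) :
    Tendsto (fun n => (∑ v ∈ G.distSphere v₀ n, g v) / √(k - 1 : ℝ) ^ n) atTop (𝓝 0) := by
  have hk' : (2 : ℝ) ≤ k := by exact_mod_cast hk
  have hcard : ∀ n, (#(G.distSphere v₀ n) : ℝ) ≤ 2 * (k - 1) ^ n := by
    rintro (_ | n)
    · simp [distSphere]
    · rw [hG.card_distSphere_succ hreg, Nat.cast_mul, Nat.cast_pow, Nat.cast_sub (by omega),
        Nat.cast_one, pow_succ]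
      have : (0 : ℝ) ≤ (k - 1) ^ n := pow_nonneg (by linarith) n
      nlinarith
  have hR := hg.tendsto_sum_of_pairwise_disjoint (fun v => sq_nonneg (g v))
    fun m n hmn => disjoint_distSphere (v₀ := v₀) hG.connected hmn
  have hlim : Tendsto (fun n => √(2 * ∑ v ∈ G.distSphere v₀ n, g v ^ 2)) atTop (𝓝 0) := by
    simpa using (hR.const_mul 2).sqrt
  refine squeeze_zero_norm (fun n => Real.abs_le_sqrt ?_) hlim
  rw [div_pow, ← pow_mul, mul_comm, pow_mul, Real.sq_sqrt (by linarith),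
    div_le_iff₀ (pow_pos (by linarith) n)]
  calc (∑ v ∈ G.distSphere v₀ n, g v) ^ 2
      ≤ #(G.distSphere v₀ n) * ∑ v ∈ G.distSphere v₀ n, g v ^ 2 :=
        sq_sum_le_card_mul_sum_sq
    _ ≤ 2 * (k - 1) ^ n * ∑ v ∈ G.distSphere v₀ n, g v ^ 2 :=
        mul_le_mul_of_nonneg_right (hcard n) (sum_nonneg fun v _ => sq_nonneg _)
    _ = _ := by ring

theorem IsTree.not_summable_sq_of_sub_sum_neighborFinset_eq_single {k : ℕ} (hk : 2 ≤ k)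
    (hG : G.IsTree) (hreg : G.IsRegularOfDegree k) {μ : ℝ} (hμ : |μ| ≤ 2 * √(k - 1 : ℝ))
    {g : V → ℝ}
    (hres : ∀ v, μ * g v - ∑ w ∈ G.neighborFinset v, g w = (Pi.single v₀ 1 : V → ℝ) v) :
    ¬ Summable fun v => g v ^ 2 := by
  intro hg
  set S : ℕ → ℝ := fun n => ∑ v ∈ G.distSphere v₀ n, g v
  set q := √(k - 1 : ℝ)
  have hk' : (2 : ℝ) ≤ k := by exact_mod_cast hk
  have hq : 0 < q := Real.sqrt_pos.mpr (by linarith)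
  have hq2 : q ^ 2 = k - 1 := Real.sq_sqrt (by linarith)
  have hS₀ : S 0 = g v₀ := sum_singleton _ _
  have hroot : μ * S 0 - S 1 = 1 := by
    rw [hS₀, ← Pi.single_eq_same (M := fun _ => ℝ) v₀ 1, ← hres,
      neighborFinset_eq_distSphere_one hG.connected]
  have hsphere : ∀ n, μ * S (n + 1) =
      ∑ v ∈ G.distSphere v₀ (n + 1), ∑ w ∈ G.neighborFinset v, g w := by
    intro n
    rw [← sub_eq_zero, mul_sum, ← sum_sub_distrib]
    refine sum_eq_zero fun v hv => ?_
    rw [hres, Pi.single_eq_of_ne]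
    rintro rfl
    rw [mem_distSphere hG.connected, dist_self] at hv
    omega
  have hone : μ * S 1 = k * S 0 + S 2 := by
    rw [hsphere, hG.sum_distSphere_one_sum_neighborFinset g hreg, nsmul_eq_mul, hS₀]
  have hrec : ∀ n, μ * S (n + 2) = (k - 1) * S (n + 1) + S (n + 3) := fun n => by
    rw [hsphere, hG.sum_distSphere_add_two_sum_neighborFinset g hreg, nsmul_eq_mul,
      Nat.cast_sub (by omega), Nat.cast_one]
  have hzero : ∀ n, S (n + 1) / q ^ (n + 1) = 0 := by
    refine eq_zero_of_tendsto_zero_of_add_eq_mul (c := μ / q) ?_ (fun n => ?_)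
      ((hG.tendsto_sum_distSphere_div_sqrt_pow hk hreg hg).comp (tendsto_add_atTop_nat 1))
    · rw [abs_div, abs_of_pos hq, div_le_iff₀ hq]
      linarith
    · calc S (n + 3) / q ^ (n + 3) + S (n + 1) / q ^ (n + 1)
          = ((k - 1) * S (n + 1) + S (n + 3)) / q ^ (n + 3) := by rw [← hq2]; field_simp; ring
        _ = μ / q * (S (n + 2) / q ^ (n + 2)) := by rw [← hrec]; field_simp; ring
  have hS : ∀ n, S (n + 1) = 0 := fun n =>
    (div_eq_zero_iff.mp (hzero n)).resolve_right (pow_ne_zero _ hq.ne')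
  have hS_zero : S 0 = 0 := by
    rw [hS 0, hS 1, mul_zero, add_zero, eq_comm, mul_eq_zero] at hone
    exact hone.resolve_left (by positivity)
  rw [hS_zero, hS 0] at hroot
  norm_num at hroot

lemma exists_sub_sum_neighborFinset_eq_single_of_notMem_spectrum
    {A : lp (fun _ : V => ℝ) 2 →L[ℝ] lp (fun _ : V => ℝ) 2}
    (hA : ∀ f v, A f v = ∑ w ∈ G.neighborFinset v, f w) {μ : ℝ}
    (hμ : μ ∉ spectrum ℝ A) (v₀ : V) : ∃ g : lp (fun _ : V => ℝ) 2,
      ∀ v, μ * g v - ∑ w ∈ G.neighborFinset v, g w = (Pi.single v₀ 1 : V → ℝ) v := by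
  rw [spectrum.notMem_iff, ContinuousLinearMap.isUnit_iff_bijective] at hμ
  obtain ⟨g, hg⟩ := hμ.surjective (lp.single 2 v₀ 1)
  refine ⟨g, fun v => ?_⟩
  rw [← hA, ← lp.coeFn_single, ← hg]
  simp [Algebra.algebraMap_eq_smul_one]
  rfl

end LocallyFinite

end SimpleGraph

open SimpleGraph

theorem kesten_spectrum_general {W : Type*} (k : ℕ) (hk : 3 ≤ k)
    (T : SimpleGraph W) [T.LocallyFinite]
    (hTconn : T.Connected) (hTacyclic : T.IsAcyclic) (hTreg : T.IsRegularOfDegree k)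
    (A : lp (fun _ : W => ℝ) 2 →L[ℝ] lp (fun _ : W => ℝ) 2)
    (hA : ∀ (f : lp (fun _ : W => ℝ) 2) (v : W),
      (A f : ∀ _ : W, ℝ) v = ∑ w ∈ T.neighborFinset v, (f : ∀ _ : W, ℝ) w) :
    spectrum ℝ A =
      Set.Icc (-(2 * Real.sqrt ((k : ℝ) - 1))) (2 * Real.sqrt ((k : ℝ) - 1)) := by
  classical
  have hT : T.IsTree := ⟨hTconn, hTacyclic⟩
  have hk₂ : 2 ≤ k := by omega
  obtain ⟨v₀⟩ := hTconn.nonempty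
  have hq : 0 < √(k - 1 : ℝ) := Real.sqrt_pos.mpr (by norm_num; omega)
  have hnorm : ‖A‖ ≤ 2 * √(k - 1 : ℝ) :=
    opNorm_le_of_sum_neighborFinset_le A hA (by positivity) (fun v => by positivity)
      (hT.sum_neighborFinset_inv_sqrt_pow_dist_le (v₀ := v₀) hk₂ hTreg)
  ext μ
  rw [Set.mem_Icc, ← abs_le]
  refine ⟨fun hμ => ?_, fun hμ => ?_⟩
  · have hμA := mem_closedBall_zero_iff.mp (spectrum.subset_closedBall_norm_mul A hμ)
    exact hμA.trans <|
      (mul_le_of_le_one_right (norm_nonneg A) ContinuousLinearMap.norm_id_le).trans hnorm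
  by_contra hspec
  obtain ⟨g, hg⟩ := exists_sub_sum_neighborFinset_eq_single_of_notMem_spectrum hA hspec v₀
  refine hT.not_summable_sq_of_sub_sum_neighborFinset_eq_single hk₂ hTreg hμ hg ?_
  simpa [real_inner_self_eq_norm_sq] using lp.summable_inner (𝕜 := ℝ) g g

/-- Kesten: the spectrum of the adjacency operator of the infinite `k`-regular tree `T_k`
acting on `ℓ²(T_k)` is the interval `[-2√(k-1), 2√(k-1)]`. -/
theorem kesten_spectrum {W : Type*} (k : ℕ) (hk : 3 ≤ k)
    (T : SimpleGraph W) [T.LocallyFinite] [DecidableEq W]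
    (hTconn : T.Connected) (hTacyclic : T.IsAcyclic) (hTreg : T.IsRegularOfDegree k)
    (A : lp (fun _ : W => ℝ) 2 →L[ℝ] lp (fun _ : W => ℝ) 2)
    (hA : ∀ (f : lp (fun _ : W => ℝ) 2) (v : W),
      (A f : ∀ _ : W, ℝ) v = ∑ w ∈ T.neighborFinset v, (f : ∀ _ : W, ℝ) w) :
    spectrum ℝ A =
      Set.Icc (-(2 * Real.sqrt ((k : ℝ) - 1))) (2 * Real.sqrt ((k : ℝ) - 1)) :=
  kesten_spectrum_general k hk T hTconn hTacyclic hTreg A hA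
end
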